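/- arXiv:2412.02710 — 2 statements merged into one kernel-verified Lean document; each statement's English description precedes it below -/
import Mathlib

section
/- Consider the RIBC system with n ≥ 3 agents, confidence bounds r_1 ≥ r_2 ≥ ⋯ ≥ r_n > 0 with r_n < 2, and random edge sets that are independent across times and satisfy P(E_t = 𝓔) ≥ δ for every 𝓔 ⊆ A and every t, for some δ ∈ (0,1). Then for every deterministic initial state x(0) with ‖x_i(0)‖ ≤ 1 for all i, almost surely there exist a (random) time τ < ∞ and a state x* = (x*_1,…,x*_n) with ‖x*_i‖ ≤ 1 for all i such that x(t) = x* for all t ≥ τ, and for every pair i ≠ j either x*_i = x*_j or ‖x*_i − x*_j‖ > max{r_i, r_j}. -/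
set_option maxHeartbeats 1000000


open Finset MeasureTheory ProbabilityTheory Metric

noncomputable section

open scoped Classical

/-- The neighbor set of agent `i`. -/
def nbr {n d : ℕ} (r : Fin n → ℝ) (E : Finset (Fin n × Fin n))
    (x : Fin n → EuclideanSpace ℝ (Fin d)) (i : Fin n) : Finset (Fin n) :=
  Finset.univ.filter (fun j => j ≠ i ∧ (i, j) ∈ E ∧ ‖x i - x j‖ ≤ r i)

/-- One step of the bounded-confidence dynamics. -/
def step {n d : ℕ} (r : Fin n → ℝ) (E : Finset (Fin n × Fin n))
    (x : Fin n → EuclideanSpace ℝ (Fin d)) : Fin n → EuclideanSpace ℝ (Fin d) :=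
  fun i => ((1 : ℝ) + (nbr r E x i).card)⁻¹ • (x i + ∑ j ∈ nbr r E x i, x j)

/-- The trajectory of the bounded-confidence dynamics driven by edge sets `E`. -/
def traj {n d : ℕ} (r : Fin n → ℝ) (E : ℕ → Finset (Fin n × Fin n))
    (x0 : Fin n → EuclideanSpace ℝ (Fin d)) : ℕ → Fin n → EuclideanSpace ℝ (Fin d)
  | 0 => x0
  | t + 1 => step r (E t) (traj r E x0 t)

instance (α : Type*) : MeasurableSpace (Finset α) := ⊤

namespace RIBC

variable {n d : ℕ} (r : Fin n → ℝ)

/-- equilibrium states -/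
def IsEquilib (x : Fin n → EuclideanSpace ℝ (Fin d)) : Prop :=
  ∀ i j : Fin n, i ≠ j → x i = x j ∨ max (r i) (r j) < ‖x i - x j‖

lemma step_of_nbr_eq_classmates {E : Finset (Fin n × Fin n)}
    {x : Fin n → EuclideanSpace ℝ (Fin d)} {i : Fin n}
    (h : ∀ j ∈ nbr r E x i, x j = x i) : step r E x i = x i := by
  have hsum : ∑ j ∈ nbr r E x i, x j = ((nbr r E x i).card : ℝ) • x i := by
    rw [Finset.sum_congr rfl (fun j hj => h j hj)]
    simp [Nat.cast_smul_eq_nsmul]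
  rw [step, hsum]
  have hpos : (0:ℝ) < 1 + (nbr r E x i).card := by positivity
  have : x i + ((nbr r E x i).card : ℝ) • x i = ((1:ℝ) + (nbr r E x i).card) • x i := by
    rw [add_smul, one_smul]
  rw [this, smul_smul, inv_mul_cancel₀ hpos.ne', one_smul]

lemma step_of_equilib {E : Finset (Fin n × Fin n)}
    {x : Fin n → EuclideanSpace ℝ (Fin d)} (hx : IsEquilib r x) :
    step r E x = x := by
  funext i
  apply step_of_nbr_eq_classmates
  intro j hj
  simp only [nbr, Finset.mem_filter] at hj
  obtain ⟨-, hne, -, hle⟩ := hj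
  rcases hx i j (Ne.symm hne) with h | h
  · exact h.symm
  · exact absurd (hle.trans (le_max_left _ _)) (not_le.mpr h)

lemma norm_step_le {E : Finset (Fin n × Fin n)}
    {x : Fin n → EuclideanSpace ℝ (Fin d)} (hx : ∀ i, ‖x i‖ ≤ 1) (i : Fin n) :
    ‖step r E x i‖ ≤ 1 := by
  rw [step, norm_smul]
  have hpos : (0:ℝ) < 1 + (nbr r E x i).card := by positivity
  have h1 : ‖x i + ∑ j ∈ nbr r E x i, x j‖ ≤ 1 + (nbr r E x i).card := by
    calc ‖x i + ∑ j ∈ nbr r E x i, x j‖ ≤ ‖x i‖ + ‖∑ j ∈ nbr r E x i, x j‖ :=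
          norm_add_le _ _
      _ ≤ 1 + ∑ j ∈ nbr r E x i, ‖x j‖ := by
          gcongr
          exacts [hx i, norm_sum_le _ _]
      _ ≤ 1 + ∑ _j ∈ nbr r E x i, (1:ℝ) := by gcongr with j hj; exact hx j
      _ = 1 + (nbr r E x i).card := by simp
  calc ‖((1:ℝ) + (nbr r E x i).card)⁻¹‖ * ‖x i + ∑ j ∈ nbr r E x i, x j‖
      ≤ ((1:ℝ) + (nbr r E x i).card)⁻¹ * (1 + (nbr r E x i).card) := by
        rw [Real.norm_eq_abs, abs_of_pos (by positivity)]
        gcongr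
      _ = 1 := inv_mul_cancel₀ hpos.ne'

lemma traj_norm_le {E : ℕ → Finset (Fin n × Fin n)}
    {x0 : Fin n → EuclideanSpace ℝ (Fin d)} (hx : ∀ i, ‖x0 i‖ ≤ 1) (t : ℕ) (i : Fin n) :
    ‖traj r E x0 t i‖ ≤ 1 := by
  induction t generalizing i with
  | zero => exact hx i
  | succ t ih => exact norm_step_le r ih i

lemma traj_add {E : ℕ → Finset (Fin n × Fin n)}
    {x0 : Fin n → EuclideanSpace ℝ (Fin d)} (a b : ℕ) :
    traj r E x0 (a + b) = traj r (fun s => E (s + a)) (traj r E x0 a) b := by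
  induction b with
  | zero => rfl
  | succ b ih => rw [← Nat.add_assoc, traj, traj, ih, Nat.add_comm a b]

lemma traj_congr {E E' : ℕ → Finset (Fin n × Fin n)}
    {x0 : Fin n → EuclideanSpace ℝ (Fin d)} (T : ℕ) (h : ∀ s < T, E s = E' s) :
    traj r E x0 T = traj r E' x0 T := by
  induction T with
  | zero => rfl
  | succ T ih =>
      rw [traj, traj, ih (fun s hs => h s (hs.trans (Nat.lt_succ_self T))),
        h T (Nat.lt_succ_self T)]

lemma traj_of_equilib {E : ℕ → Finset (Fin n × Fin n)}
    {x0 : Fin n → EuclideanSpace ℝ (Fin d)} {T : ℕ}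
    (h : IsEquilib r (traj r E x0 T)) (u : ℕ) :
    traj r E x0 (T + u) = traj r E x0 T := by
  induction u with
  | zero => rfl
  | succ u ih => rw [← Nat.add_assoc, traj, ih, step_of_equilib r h]

/-- compose two control sequences -/
lemma comp_ctrl {x y z : Fin n → EuclideanSpace ℝ (Fin d)} {T₁ T₂ : ℕ}
    (h₁ : ∃ Es : ℕ → Finset (Fin n × Fin n),
      (∀ s, Es s ⊆ (Finset.univ : Finset (Fin n)).offDiag) ∧ traj r Es x T₁ = y)
    (h₂ : ∃ Es : ℕ → Finset (Fin n × Fin n),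
      (∀ s, Es s ⊆ (Finset.univ : Finset (Fin n)).offDiag) ∧ traj r Es y T₂ = z) :
    ∃ Es : ℕ → Finset (Fin n × Fin n),
      (∀ s, Es s ⊆ (Finset.univ : Finset (Fin n)).offDiag) ∧ traj r Es x (T₁ + T₂) = z := by
  obtain ⟨E₁, hE₁, h₁⟩ := h₁
  obtain ⟨E₂, hE₂, h₂⟩ := h₂
  refine ⟨fun s => if s < T₁ then E₁ s else E₂ (s - T₁), fun s => ?_, ?_⟩
  · dsimp only; split <;> [exact hE₁ s; exact hE₂ _]
  · rw [traj_add]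
    have e1 : traj r (fun s => if s < T₁ then E₁ s else E₂ (s - T₁)) x T₁ = y := by
      rw [traj_congr r (E' := E₁) T₁ (fun s hs => by simp [hs]), h₁]
    rw [e1]
    have e2 : (fun s => if s + T₁ < T₁ then E₁ (s + T₁) else E₂ (s + T₁ - T₁)) = E₂ := by
      funext s
      simp
    rw [e2, h₂]


lemma step_single {x : Fin n → EuclideanSpace ℝ (Fin d)} {i j : Fin n}
    (hij : j ≠ i) (hr : ‖x i - x j‖ ≤ r i) :
    step r {(i, j)} x = Function.update x i ((2:ℝ)⁻¹ • (x i + x j)) := by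
  have hnbri : nbr r {(i, j)} x i = {j} := by
    ext k
    simp only [nbr, Finset.mem_filter, Finset.mem_univ, true_and, Finset.mem_singleton,
      Prod.mk.injEq]
    aesop
  funext k
  by_cases hk : k = i
  · subst hk
    rw [step, hnbri, Function.update_self]
    simp only [Finset.card_singleton, Nat.cast_one, Finset.sum_singleton]
    norm_num
  · have hnbrk : nbr r {(i, j)} x k = ∅ := by
      ext m
      simp only [nbr, Finset.mem_filter, Finset.mem_univ, true_and, Finset.mem_singleton,
        Prod.mk.injEq, Finset.notMem_empty, iff_false]
      rintro ⟨-, ⟨rfl, -⟩, -⟩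
      exact hk rfl
    rw [step, hnbrk, Function.update_of_ne hk]
    simp

lemma step_clique {x : Fin n → EuclideanSpace ℝ (Fin d)} {S : Finset (Fin n)}
    (hS : ∀ k ∈ S, ∀ m ∈ S, ‖x k - x m‖ ≤ r k) :
    step r S.offDiag x =
      fun k => if k ∈ S then ((S.card : ℝ))⁻¹ • ∑ m ∈ S, x m else x k := by
  funext k
  by_cases hk : k ∈ S
  · have hnbr : nbr r S.offDiag x k = S.erase k := by
      ext m
      simp only [nbr, Finset.mem_filter, Finset.mem_univ, true_and, Finset.mem_offDiag,
        Finset.mem_erase]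
      constructor
      · rintro ⟨hmk, ⟨-, hm, -⟩, -⟩; exact ⟨hmk, hm⟩
      · rintro ⟨hmk, hm⟩; exact ⟨hmk, ⟨hk, hm, Ne.symm hmk⟩, hS k hk m hm⟩
    have hcard : (1:ℝ) + ((S.erase k).card : ℝ) = S.card := by
      rw [Finset.card_erase_of_mem hk, Nat.cast_sub (Finset.one_le_card.mpr ⟨k, hk⟩)]
      ring
    rw [step, hnbr, if_pos hk, Finset.add_sum_erase _ _ hk, hcard]
  · have hnbr : nbr r S.offDiag x k = ∅ := by
      ext m
      simp only [nbr, Finset.mem_filter, Finset.mem_univ, true_and, Finset.mem_offDiag,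
        Finset.notMem_empty, iff_false]
      rintro ⟨-, ⟨hkS, -, -⟩, -⟩
      exact hk hkS
    rw [step, hnbr, if_neg hk]
    simp

lemma offDiag_subset (S : Finset (Fin n)) :
    S.offDiag ⊆ (Finset.univ : Finset (Fin n)).offDiag := by
  intro p hp
  rw [Finset.mem_offDiag] at hp ⊢
  exact ⟨Finset.mem_univ _, Finset.mem_univ _, hp.2.2⟩

lemma approach {x : Fin n → EuclideanSpace ℝ (Fin d)} {i j₀ : Fin n} {ρ : ℝ} {K₀ : ℕ}
    (hρ : 0 < ρ) (hK : (2:ℝ) ≤ ρ * 2 ^ K₀)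
    (hij : j₀ ≠ i) (hri : ‖x i - x j₀‖ ≤ r i) (h2 : ‖x i - x j₀‖ ≤ 2)
    (hgρ : ρ < ‖x i - x j₀‖) :
    ∃ (T : ℕ) (t : ℝ),
      T ≤ K₀ ∧ 0 < t ∧ t ≤ 1 ∧
      ρ / 2 < t * ‖x i - x j₀‖ ∧ t * ‖x i - x j₀‖ ≤ ρ ∧
      traj r (fun _ => {(i, j₀)}) x T
        = Function.update x i (x j₀ + t • (x i - x j₀)) := by
  set g := ‖x i - x j₀‖ with hg
  have hg0 : 0 < g := hρ.trans hgρ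
  have key : ∀ m : ℕ, traj r (fun _ => {(i, j₀)}) x m
      = Function.update x i (x j₀ + ((2:ℝ)⁻¹) ^ m • (x i - x j₀)) := by
    intro m
    induction m with
    | zero =>
        simp only [traj, pow_zero, one_smul, add_sub_cancel]
        exact (Function.update_eq_self i x).symm
    | succ m ih =>
        rw [traj, ih]
        set v := x j₀ + ((2:ℝ)⁻¹) ^ m • (x i - x j₀) with hv
        have hyj : Function.update x i v j₀ = x j₀ := Function.update_of_ne hij _ _
        have hyi : Function.update x i v i = v := Function.update_self _ _ _
        have hnorm : ‖Function.update x i v i - Function.update x i v j₀‖ ≤ r i := by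
          rw [hyi, hyj, hv, add_sub_cancel_left, norm_smul, Real.norm_eq_abs,
            abs_of_pos (by positivity : (0:ℝ) < ((2:ℝ)⁻¹) ^ m)]
          have h1 : ((2:ℝ)⁻¹) ^ m ≤ 1 := pow_le_one₀ (by norm_num) (by norm_num)
          nlinarith
        rw [step_single r hij hnorm, Function.update_idem, hyi, hyj]
        refine congrArg (Function.update x i) ?_
        rw [hv, pow_succ]
        module
  -- choose minimal m with (2⁻¹)^m * g ≤ ρ
  have hex : ∃ m : ℕ, ((2:ℝ)⁻¹) ^ m * g ≤ ρ := by
    refine ⟨K₀, ?_⟩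
    have h2K : (0:ℝ) < 2 ^ K₀ := by positivity
    rw [inv_pow]
    rw [inv_mul_le_iff₀ h2K]
    calc g ≤ 2 := h2
      _ ≤ ρ * 2 ^ K₀ := hK
      _ = 2 ^ K₀ * ρ := mul_comm _ _
  classical
  set m := Nat.find hex with hm
  have hmle : ((2:ℝ)⁻¹) ^ m * g ≤ ρ := Nat.find_spec hex
  have hmK : m ≤ K₀ := Nat.find_le (by
    have h2K : (0:ℝ) < 2 ^ K₀ := by positivity
    rw [inv_pow, inv_mul_le_iff₀ h2K]
    calc g ≤ 2 := h2
      _ ≤ ρ * 2 ^ K₀ := hK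
      _ = 2 ^ K₀ * ρ := mul_comm _ _)
  have hm0 : m ≠ 0 := by
    intro h0
    rw [h0, pow_zero, one_mul] at hmle
    exact absurd hmle (not_le.mpr hgρ)
  have hmin : ρ < ((2:ℝ)⁻¹) ^ (m - 1) * g := by
    have := Nat.find_min hex (m := m - 1) (by omega)
    linarith [not_le.mp this]
  refine ⟨m, ((2:ℝ)⁻¹) ^ m, hmK, by positivity, ?_, ?_, hmle, key m⟩
  · exact pow_le_one₀ (by norm_num) (by norm_num)
  · have : ((2:ℝ)⁻¹) ^ (m - 1) = 2 * ((2:ℝ)⁻¹) ^ m := by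
      conv_rhs => rw [show m = (m - 1) + 1 by omega]
      rw [pow_succ]
      ring
    rw [this] at hmin
    linarith


/-- one full symmetric merge of two coincident clusters within range `ρ`. -/
lemma two_cluster_step {ρ : ℝ} (hρr : ∀ k, ρ ≤ r k)
    {x : Fin n → EuclideanSpace ℝ (Fin d)} {S₁ S₂ : Finset (Fin n)}
    {a b : EuclideanSpace ℝ (Fin d)}
    (hdisj : Disjoint S₁ S₂) (h₁ : ∀ k ∈ S₁, x k = a) (h₂ : ∀ k ∈ S₂, x k = b)
    (hab : ‖a - b‖ ≤ ρ) :
    step r ((S₁ ∪ S₂).offDiag) x = fun k => if k ∈ S₁ ∪ S₂ then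
        (((S₁ ∪ S₂).card : ℝ))⁻¹ • ((S₁.card : ℝ) • a + (S₂.card : ℝ) • b)
      else x k := by
  have hpos : ∀ k ∈ S₁ ∪ S₂, x k = a ∨ x k = b := by
    intro k hk
    rcases Finset.mem_union.mp hk with h | h
    · exact Or.inl (h₁ k h)
    · exact Or.inr (h₂ k h)
  have hdist : ∀ k ∈ S₁ ∪ S₂, ∀ m ∈ S₁ ∪ S₂, ‖x k - x m‖ ≤ r k := by
    intro k hk m hm
    have hρk := hρr k
    rcases hpos k hk with hk' | hk' <;> rcases hpos m hm with hm' | hm' <;> rw [hk', hm']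
    · simp only [sub_self, norm_zero]; linarith [norm_nonneg (a - b)]
    · exact hab.trans hρk
    · rw [norm_sub_rev]; exact hab.trans hρk
    · simp only [sub_self, norm_zero]; linarith [norm_nonneg (a - b)]
  rw [step_clique r hdist]
  have hsum : ∑ m ∈ S₁ ∪ S₂, x m = (S₁.card : ℝ) • a + (S₂.card : ℝ) • b := by
    rw [Finset.sum_union hdisj, Finset.sum_congr rfl h₁, Finset.sum_congr rfl h₂]
    simp [Nat.cast_smul_eq_nsmul]
  rw [hsum]

lemma shuttle_aux {ρ : ℝ} {K₀ : ℕ} (hρ : 0 < ρ) (hρr : ∀ k, ρ ≤ r k)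
    (hK : (2:ℝ) ≤ ρ * 2 ^ K₀) :
    ∀ (M : ℕ) (x : Fin n → EuclideanSpace ℝ (Fin d)) (S₁ S₂ : Finset (Fin n))
      (a b : EuclideanSpace ℝ (Fin d)) (i : Fin n),
      Disjoint S₁ S₂ → S₂.Nonempty →
      (∀ k ∈ S₁, x k = a) → (∀ k ∈ S₂, x k = b) → i ∈ S₁ →
      ‖a - b‖ ≤ r i → ‖a - b‖ ≤ 2 → ‖a - b‖ ≤ ρ + M * (ρ / (2 * n)) →
      ∃ (Es : ℕ → Finset (Fin n × Fin n)) (T : ℕ) (w : EuclideanSpace ℝ (Fin d)),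
        (∀ s, Es s ⊆ (Finset.univ : Finset (Fin n)).offDiag) ∧
        T ≤ (M + 1) * (K₀ + 1) ∧
        (∀ k ∈ S₁ ∪ S₂, traj r Es x T k = w) ∧
        (∀ k ∉ S₁ ∪ S₂, traj r Es x T k = x k) := by
  -- the easy terminal merge, used in both branches
  have base : ∀ (x : Fin n → EuclideanSpace ℝ (Fin d)) (S₁ S₂ : Finset (Fin n))
      (a b : EuclideanSpace ℝ (Fin d)),
      Disjoint S₁ S₂ → (∀ k ∈ S₁, x k = a) → (∀ k ∈ S₂, x k = b) → ‖a - b‖ ≤ ρ →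
      ∃ (Es : ℕ → Finset (Fin n × Fin n)) (w : EuclideanSpace ℝ (Fin d)),
        (∀ s, Es s ⊆ (Finset.univ : Finset (Fin n)).offDiag) ∧
        (∀ k ∈ S₁ ∪ S₂, traj r Es x 1 k = w) ∧
        (∀ k ∉ S₁ ∪ S₂, traj r Es x 1 k = x k) := by
    intro x S₁ S₂ a b hdisj h₁ h₂ hab
    refine ⟨fun _ => (S₁ ∪ S₂).offDiag,
      (((S₁ ∪ S₂).card : ℝ))⁻¹ • ((S₁.card : ℝ) • a + (S₂.card : ℝ) • b),
      fun _ => offDiag_subset _, ?_, ?_⟩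
    · intro k hk
      show step r ((S₁ ∪ S₂).offDiag) x k = _
      rw [two_cluster_step r hρr hdisj h₁ h₂ hab]
      simp [hk]
    · intro k hk
      show step r ((S₁ ∪ S₂).offDiag) x k = _
      rw [two_cluster_step r hρr hdisj h₁ h₂ hab]
      simp [hk]
  intro M
  induction M with
  | zero =>
      intro x S₁ S₂ a b i hdisj hS₂ hxa hxb hi hri h2 hM
      simp only [Nat.cast_zero, zero_mul, add_zero] at hM
      obtain ⟨Es, w, hsub, hin, hout⟩ := base x S₁ S₂ a b hdisj hxa hxb hM
      exact ⟨Es, 1, w, hsub,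
        Nat.one_le_iff_ne_zero.mpr (Nat.mul_ne_zero (Nat.succ_ne_zero 0) (Nat.succ_ne_zero K₀)),
        hin, hout⟩
  | succ M ih =>
      intro x S₁ S₂ a b i hdisj hS₂ hxa hxb hi hri h2 hM
      by_cases hgρ : ‖a - b‖ ≤ ρ
      · obtain ⟨Es, w, hsub, hin, hout⟩ := base x S₁ S₂ a b hdisj hxa hxb hgρ
        exact ⟨Es, 1, w, hsub, by nlinarith, hin, hout⟩
      push_neg at hgρ
      -- the approach trip
      obtain ⟨j₀, hj₀⟩ := hS₂
      have hij : j₀ ≠ i := fun h => (Finset.disjoint_left.mp hdisj hi) (h ▸ hj₀)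
      have hxi : x i = a := hxa i hi
      have hxj : x j₀ = b := hxb j₀ hj₀
      have hgeq : ‖x i - x j₀‖ = ‖a - b‖ := by rw [hxi, hxj]
      obtain ⟨T₁, t, hT₁, ht0, ht1, htlow, hthigh, htraj⟩ :=
        approach r hρ hK hij (by rw [hgeq]; exact hri) (by rw [hgeq]; exact h2)
          (by rw [hgeq]; exact hgρ)
      rw [hgeq] at htlow hthigh
      set p := b + t • (a - b) with hp
      have hyedef : x j₀ + t • (x i - x j₀) = p := by rw [hxi, hxj]
      rw [hyedef] at htraj
      set y := Function.update x i p with hy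
      have hyi : y i = p := Function.update_self _ _ _
      have hyk : ∀ k, k ≠ i → y k = x k := fun k hk => Function.update_of_ne hk _ _
      have hiS₂ : i ∉ S₂ := Finset.disjoint_left.mp hdisj hi
      have hdisj' : Disjoint ({i} : Finset (Fin n)) S₂ := by
        simp [Finset.disjoint_left, hiS₂]
      have hpb : ‖p - b‖ ≤ ρ := by
        rw [hp, add_sub_cancel_left, norm_smul, Real.norm_eq_abs, abs_of_pos ht0]
        exact hthigh
      -- the merge of {i} into the cluster S₂
      have hy₁ : ∀ k ∈ ({i} : Finset (Fin n)), y k = p := by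
        intro k hk; rw [Finset.mem_singleton.mp hk, hyi]
      have hy₂ : ∀ k ∈ S₂, y k = b := by
        intro k hk
        rw [hyk k (fun h => hiS₂ (h ▸ hk)), hxb k hk]
      have hzdef := two_cluster_step r hρr hdisj' hy₁ hy₂ hpb
      set m : ℝ := (S₂.card : ℝ) with hm
      have hm0 : 0 ≤ m := by positivity
      have hm1 : (1:ℝ) ≤ m := by
        rw [hm]; exact_mod_cast Finset.one_le_card.mpr ⟨j₀, hj₀⟩
      have hcard : ((({i} : Finset (Fin n)) ∪ S₂).card : ℝ) = 1 + m := by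
        rw [Finset.card_union_of_disjoint hdisj', Finset.card_singleton]
        push_cast [hm]; ring
      set c : ℝ := (1 + m)⁻¹ * t with hc
      have h1m : (0:ℝ) < 1 + m := by linarith
      have hc0 : 0 < c := by positivity
      have hc1 : c ≤ 1 := by
        rw [hc]
        calc (1 + m)⁻¹ * t ≤ 1 * 1 := by
              apply mul_le_mul _ ht1 ht0.le zero_le_one
              rw [inv_le_one_iff₀]; right; linarith
          _ = 1 := one_mul 1
      set w₁ : EuclideanSpace ℝ (Fin d) := b + c • (a - b) with hw₁
      have hw₁eq : ((((({i} : Finset (Fin n)) ∪ S₂).card : ℝ))⁻¹ •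
          (((({i} : Finset (Fin n)).card : ℝ)) • p + m • b)) = w₁ := by
        rw [hcard, Finset.card_singleton, hw₁, hp, Nat.cast_one]
        have expand : (1:ℝ) • (b + t • (a - b)) + m • b = (1 + m) • b + t • (a - b) := by
          module
        rw [expand, smul_add, smul_smul, inv_mul_cancel₀ h1m.ne', one_smul, smul_smul, ← hc]
      -- membership bookkeeping
      have hzin : ∀ k ∈ ({i} : Finset (Fin n)) ∪ S₂,
          step r ((({i} : Finset (Fin n)) ∪ S₂).offDiag) y k = w₁ := by
        intro k hk
        rw [hzdef]
        simp only [hk, if_pos]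
        rw [hw₁eq]
      have hzout : ∀ k ∉ ({i} : Finset (Fin n)) ∪ S₂,
          step r ((({i} : Finset (Fin n)) ∪ S₂).offDiag) y k = y k := by
        intro k hk
        rw [hzdef]
        simp only [hk, if_false]
      have hstep1 : ∃ Es : ℕ → Finset (Fin n × Fin n),
          (∀ s, Es s ⊆ (Finset.univ : Finset (Fin n)).offDiag) ∧
          traj r Es x (T₁ + 1) = step r ((({i} : Finset (Fin n)) ∪ S₂).offDiag) y := by
        refine comp_ctrl r ⟨fun _ => {(i, j₀)}, fun s => ?_, htraj⟩
          ⟨fun _ => (({i} : Finset (Fin n)) ∪ S₂).offDiag, fun _ => offDiag_subset _, rfl⟩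
        intro e he
        rw [Finset.mem_singleton.mp he, Finset.mem_offDiag]
        exact ⟨Finset.mem_univ _, Finset.mem_univ _, hij.symm⟩
      -- gap bookkeeping
      have hgap : ‖w₁ - a‖ = (1 - c) * ‖a - b‖ := by
        have : w₁ - a = (1 - c) • (b - a) := by rw [hw₁]; module
        rw [this, norm_smul, Real.norm_eq_abs, abs_of_nonneg (by linarith), norm_sub_rev]
      have hn2 : m + 1 ≤ (n : ℝ) := by
        have := Finset.card_union_of_disjoint hdisj
        have hle : S₁.card + S₂.card ≤ n := by
          rw [← this]
          simpa using Finset.card_le_univ (S₁ ∪ S₂)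
        have h1 : 1 ≤ S₁.card := Finset.one_le_card.mpr ⟨i, hi⟩
        rw [hm]
        push_cast
        have : (S₂.card : ℝ) + 1 ≤ (S₁.card : ℝ) + (S₂.card : ℝ) := by
          have : (1:ℝ) ≤ (S₁.card : ℝ) := by exact_mod_cast h1
          linarith
        calc (S₂.card : ℝ) + 1 ≤ (S₁.card : ℝ) + S₂.card := this
          _ ≤ n := by exact_mod_cast hle
      have hngain : ρ / (2 * n) ≤ c * ‖a - b‖ := by
        have hnpos : (0:ℝ) < n := by exact_mod_cast i.pos
        have h2' : ρ / 2 ≤ t * ‖a - b‖ := htlow.le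
        have hinv : (n:ℝ)⁻¹ ≤ (1 + m)⁻¹ := by
          apply inv_anti₀ h1m
          linarith
        have hmain : (n:ℝ)⁻¹ * (ρ / 2) ≤ (1 + m)⁻¹ * (t * ‖a - b‖) :=
          mul_le_mul hinv h2' (by positivity) (by positivity)
        have heq : ρ / (2 * n) = (n:ℝ)⁻¹ * (ρ / 2) := by
          rw [div_mul_eq_div_div, div_eq_mul_inv, mul_comm]
        have hceq : c * ‖a - b‖ = (1 + m)⁻¹ * (t * ‖a - b‖) := by rw [hc]; ring
        rw [heq, hceq]
        exact hmain
      by_cases hS₁i : S₁ = {i}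
      · -- everything is already merged
        obtain ⟨Es, hsub, htr⟩ := hstep1
        refine ⟨Es, T₁ + 1, w₁, hsub, ?_, ?_, ?_⟩
        · calc T₁ + 1 ≤ K₀ + 1 := by omega
            _ ≤ (M + 1 + 1) * (K₀ + 1) := Nat.le_mul_of_pos_left _ (Nat.succ_pos _)
        · intro k hk
          rw [htr]
          exact hzin k (by rwa [← hS₁i])
        · intro k hk
          rw [htr, hzout k (by rwa [hS₁i] at hk), hyk]
          intro h
          exact hk (h ▸ (by rw [hS₁i]; simp : i ∈ S₁ ∪ S₂))
      · -- recurse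
        have hS₁' : (S₁.erase i).Nonempty := by
          rcases Finset.eq_empty_or_nonempty (S₁.erase i) with h | h
          · exact absurd (by
              apply Finset.Subset.antisymm
              · intro k hk
                by_contra hki
                have : k ∈ S₁.erase i := Finset.mem_erase.mpr
                  ⟨fun hh => hki (by rw [hh]; exact Finset.mem_singleton_self i), hk⟩
                rw [h] at this
                exact absurd this (Finset.notMem_empty k)
              · intro k hk
                rw [Finset.mem_singleton.mp hk]; exact hi) hS₁i
          · exact h
        have hdisj'' : Disjoint (({i} : Finset (Fin n)) ∪ S₂) (S₁.erase i) := by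
          rw [Finset.disjoint_left]
          intro k hk hk'
          rcases Finset.mem_union.mp hk with h | h
          · exact (Finset.mem_erase.mp hk').1 (Finset.mem_singleton.mp h)
          · exact Finset.disjoint_right.mp hdisj h (Finset.mem_of_mem_erase hk')
        have hz₂ : ∀ k ∈ S₁.erase i,
            step r ((({i} : Finset (Fin n)) ∪ S₂).offDiag) y k = a := by
          intro k hk
          have hki : k ≠ i := (Finset.mem_erase.mp hk).1
          have hkS₂ : k ∉ S₂ :=
            Finset.disjoint_left.mp hdisj (Finset.mem_of_mem_erase hk)
          rw [hzout k (by simp [hki, hkS₂]), hyk k hki, hxa k (Finset.mem_of_mem_erase hk)]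
        have hiin : i ∈ ({i} : Finset (Fin n)) ∪ S₂ := by simp
        have hgle : ‖w₁ - a‖ ≤ ‖a - b‖ := by
          rw [hgap]
          nlinarith [norm_nonneg (a - b)]
        obtain ⟨Es₂, T₂, w, hsub₂, hT₂, hin₂, hout₂⟩ :=
          ih (step r ((({i} : Finset (Fin n)) ∪ S₂).offDiag) y)
            (({i} : Finset (Fin n)) ∪ S₂) (S₁.erase i) w₁ a i hdisj'' hS₁' hzin hz₂ hiin
            (hgle.trans hri) (hgle.trans h2)
            (by
              rw [hgap]
              have hMc : ((M + 1 : ℕ) : ℝ) = (M : ℝ) + 1 := by push_cast; ring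
              rw [hMc] at hM
              nlinarith [norm_nonneg (a - b)])
        obtain ⟨Es, hsub, htr⟩ := comp_ctrl r hstep1 ⟨Es₂, hsub₂, rfl⟩
        have hsets : (({i} : Finset (Fin n)) ∪ S₂) ∪ S₁.erase i = S₁ ∪ S₂ := by
          ext k
          simp only [Finset.mem_union, Finset.mem_singleton, Finset.mem_erase]
          constructor
          · rintro ((rfl | h) | ⟨-, h⟩)
            · exact Or.inl hi
            · exact Or.inr h
            · exact Or.inl h
          · rintro (h | h)
            · by_cases hki : k = i
              · exact Or.inl (Or.inl hki)
              · exact Or.inr ⟨hki, h⟩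
            · exact Or.inl (Or.inr h)
        refine ⟨Es, (T₁ + 1) + T₂, w, hsub, ?_, ?_, ?_⟩
        · have hT : (M + 1 + 1) * (K₀ + 1) = (K₀ + 1) + (M + 1) * (K₀ + 1) := by ring
          omega
        · intro k hk
          rw [htr]
          exact hin₂ k (by rw [hsets]; exact hk)
        · intro k hk
          rw [htr, hout₂ k (by rw [hsets]; exact hk)]
          have hki : k ≠ i := fun h => hk (h ▸ Finset.mem_union_left _ hi)
          have hkS₂ : k ∉ S₂ := fun h => hk (Finset.mem_union_right _ h)
          rw [hzout k (by simp [hki, hkS₂]), hyk k hki]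
  

lemma merge_classes {ρ : ℝ} {K₀ M₀ : ℕ} (hρ : 0 < ρ)
    (hρr : ∀ k, ρ ≤ r k) (hK : (2:ℝ) ≤ ρ * 2 ^ K₀)
    (hM₀ : (2:ℝ) ≤ ρ + M₀ * (ρ / (2 * n)))
    {x : Fin n → EuclideanSpace ℝ (Fin d)} (hx : ∀ k, ‖x k‖ ≤ 1)
    {i j : Fin n} (hne : x i ≠ x j) (hri : ‖x i - x j‖ ≤ r i) :
    ∃ (Es : ℕ → Finset (Fin n × Fin n)) (T : ℕ),
      (∀ s, Es s ⊆ (Finset.univ : Finset (Fin n)).offDiag) ∧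
      T ≤ (M₀ + 1) * (K₀ + 1) ∧
      ((Finset.image (traj r Es x T) Finset.univ).card <
        (Finset.image x Finset.univ).card) := by
  set S₁ := Finset.univ.filter (fun k => x k = x i) with hS₁
  set S₂ := Finset.univ.filter (fun k => x k = x j) with hS₂
  have hmem₁ : ∀ k, k ∈ S₁ ↔ x k = x i := by intro k; simp [hS₁]
  have hmem₂ : ∀ k, k ∈ S₂ ↔ x k = x j := by intro k; simp [hS₂]
  have hdisj : Disjoint S₁ S₂ := by
    rw [Finset.disjoint_left]
    intro k hk hk'
    exact hne (((hmem₁ k).mp hk).symm.trans ((hmem₂ k).mp hk'))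
  have h2 : ‖x i - x j‖ ≤ 2 := by
    calc ‖x i - x j‖ ≤ ‖x i‖ + ‖x j‖ := norm_sub_le _ _
      _ ≤ 2 := by linarith [hx i, hx j]
  obtain ⟨Es, T, w, hsub, hT, hin, hout⟩ :=
    shuttle_aux r hρ hρr hK M₀ x S₁ S₂ (x i) (x j) i hdisj ⟨j, (hmem₂ j).mpr rfl⟩
      (fun k hk => (hmem₁ k).mp hk) (fun k hk => (hmem₂ k).mp hk)
      ((hmem₁ i).mpr rfl) hri h2 (h2.trans hM₀)
  refine ⟨Es, T, hsub, hT, ?_⟩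
  set y := traj r Es x T with hy
  have himg : Finset.image y Finset.univ ⊆
      insert w (((Finset.image x Finset.univ).erase (x i)).erase (x j)) := by
    intro v hv
    obtain ⟨k, -, rfl⟩ := Finset.mem_image.mp hv
    by_cases hk : k ∈ S₁ ∪ S₂
    · rw [hin k hk]; exact Finset.mem_insert_self _ _
    · rw [hout k hk]
      apply Finset.mem_insert_of_mem
      have hk1 : x k ≠ x i := fun h =>
        hk (Finset.mem_union_left _ ((hmem₁ k).mpr h))
      have hk2 : x k ≠ x j := fun h =>
        hk (Finset.mem_union_right _ ((hmem₂ k).mpr h))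
      exact Finset.mem_erase.mpr ⟨hk2, Finset.mem_erase.mpr
        ⟨hk1, Finset.mem_image.mpr ⟨k, Finset.mem_univ _, rfl⟩⟩⟩
  have hxi : x i ∈ Finset.image x Finset.univ :=
    Finset.mem_image.mpr ⟨i, Finset.mem_univ _, rfl⟩
  have hxj : x j ∈ (Finset.image x Finset.univ).erase (x i) :=
    Finset.mem_erase.mpr ⟨fun h => hne h.symm, Finset.mem_image.mpr
      ⟨j, Finset.mem_univ _, rfl⟩⟩
  have hc1 := Finset.card_le_card himg
  have hc2 := Finset.card_insert_le w (((Finset.image x Finset.univ).erase (x i)).erase (x j))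
  have hc3 : (((Finset.image x Finset.univ).erase (x i)).erase (x j)).card
      = ((Finset.image x Finset.univ).erase (x i)).card - 1 :=
    Finset.card_erase_of_mem hxj
  have hc4 : ((Finset.image x Finset.univ).erase (x i)).card
      = (Finset.image x Finset.univ).card - 1 :=
    Finset.card_erase_of_mem hxi
  have hc5 : 1 ≤ ((Finset.image x Finset.univ).erase (x i)).card :=
    Finset.one_le_card.mpr ⟨x j, hxj⟩
  have hc6 : 1 ≤ (Finset.image x Finset.univ).card :=
    Finset.one_le_card.mpr ⟨x i, hxi⟩
  omega

lemma reach_equilib {ρ : ℝ} {K₀ M₀ : ℕ} (hρ : 0 < ρ)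
    (hρr : ∀ k, ρ ≤ r k) (hK : (2:ℝ) ≤ ρ * 2 ^ K₀)
    (hM₀ : (2:ℝ) ≤ ρ + M₀ * (ρ / (2 * n))) :
    ∀ (m : ℕ) (x : Fin n → EuclideanSpace ℝ (Fin d)), (∀ k, ‖x k‖ ≤ 1) →
      (Finset.image x Finset.univ).card ≤ m →
      ∃ (Es : ℕ → Finset (Fin n × Fin n)) (T : ℕ),
        (∀ s, Es s ⊆ (Finset.univ : Finset (Fin n)).offDiag) ∧
        T ≤ m * ((M₀ + 1) * (K₀ + 1)) ∧
        IsEquilib r (traj r Es x T) := by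
  intro m
  induction m with
  | zero =>
      intro x hx hcard
      by_cases hn0 : n = 0
      · refine ⟨fun _ => ∅, 0, fun s => by simp, Nat.zero_le _, ?_⟩
        intro i j hij
        exact absurd (i.isLt) (by omega)
      · exfalso
        have : (Finset.image x Finset.univ).Nonempty := by
          refine ⟨x ⟨0, Nat.pos_of_ne_zero hn0⟩, Finset.mem_image.mpr
            ⟨⟨0, Nat.pos_of_ne_zero hn0⟩, Finset.mem_univ _, rfl⟩⟩
        have := Finset.one_le_card.mpr this
        omega
  | succ m ih =>
      intro x hx hcard
      by_cases heq : IsEquilib r x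
      · exact ⟨fun _ => ∅, 0, fun s => by simp, Nat.zero_le _, heq⟩
      · rw [IsEquilib] at heq
        push_neg at heq
        obtain ⟨i, j, hij, hne, hle⟩ := heq
        have hmerge : ∃ (Es : ℕ → Finset (Fin n × Fin n)) (T : ℕ),
            (∀ s, Es s ⊆ (Finset.univ : Finset (Fin n)).offDiag) ∧
            T ≤ (M₀ + 1) * (K₀ + 1) ∧
            ((Finset.image (traj r Es x T) Finset.univ).card <
              (Finset.image x Finset.univ).card) := by
          by_cases hrij : r j ≤ r i
          · exact merge_classes r hρ hρr hK hM₀ hx hne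
              (hle.trans (by rw [max_eq_left hrij]))
          · push_neg at hrij
            have : ‖x j - x i‖ ≤ r j := by
              rw [norm_sub_rev]
              exact hle.trans (by rw [max_eq_right hrij.le])
            exact merge_classes r hρ hρr hK hM₀ hx (Ne.symm hne) this
        obtain ⟨Es₁, T₁, hsub₁, hT₁, hlt⟩ := hmerge
        have hy : ∀ k, ‖traj r Es₁ x T₁ k‖ ≤ 1 := fun k => traj_norm_le r hx T₁ k
        obtain ⟨Es₂, T₂, hsub₂, hT₂, hequi⟩ := ih (traj r Es₁ x T₁) hy (by omega)
        obtain ⟨Es, hsub, htr⟩ := comp_ctrl r ⟨Es₁, hsub₁, rfl⟩ ⟨Es₂, hsub₂, rfl⟩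
        refine ⟨Es, T₁ + T₂, hsub, ?_, by rw [htr]; exact hequi⟩
        have : (m + 1) * ((M₀ + 1) * (K₀ + 1)) = (M₀ + 1) * (K₀ + 1)
            + m * ((M₀ + 1) * (K₀ + 1)) := by ring
        omega

/-- Uniform-time controllability. -/
lemma ctrl {ρ : ℝ} (hρ : 0 < ρ) (hρr : ∀ k, ρ ≤ r k) :
    ∃ L : ℕ, ∀ x : Fin n → EuclideanSpace ℝ (Fin d), (∀ k, ‖x k‖ ≤ 1) →
      ∃ Es : ℕ → Finset (Fin n × Fin n),
        (∀ s, Es s ⊆ (Finset.univ : Finset (Fin n)).offDiag) ∧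
        IsEquilib r (traj r Es x L) := by
  obtain ⟨K₀, hK₀⟩ := pow_unbounded_of_one_lt (2 / ρ) (by norm_num : (1:ℝ) < 2)
  have hK : (2:ℝ) ≤ ρ * 2 ^ K₀ := by
    rw [div_lt_iff₀ hρ] at hK₀
    nlinarith
  have hn2 : (0:ℝ) < ρ / (2 * n) ∨ n = 0 := by
    rcases Nat.eq_zero_or_pos n with h | h
    · exact Or.inr h
    · left; positivity
  rcases hn2 with hn2 | hn0
  · obtain ⟨M₀, hM₀'⟩ := exists_nat_gt ((2:ℝ) / (ρ / (2 * n)))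
    have hM₀ : (2:ℝ) ≤ ρ + M₀ * (ρ / (2 * n)) := by
      rw [div_lt_iff₀ hn2] at hM₀'
      nlinarith
    refine ⟨n * ((M₀ + 1) * (K₀ + 1)), fun x hx => ?_⟩
    have hcard : (Finset.image x Finset.univ).card ≤ n := by
      calc (Finset.image x Finset.univ).card ≤ (Finset.univ : Finset (Fin n)).card :=
            Finset.card_image_le
        _ = n := by simp
    obtain ⟨Es, T, hsub, hT, hequi⟩ :=
      reach_equilib r hρ hρr hK hM₀ n x hx hcard
    refine ⟨Es, hsub, ?_⟩
    have : n * ((M₀ + 1) * (K₀ + 1)) = T + (n * ((M₀ + 1) * (K₀ + 1)) - T) := by omega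
    rw [this, traj_of_equilib r hequi]
    exact hequi
  · refine ⟨0, fun x hx => ⟨fun _ => ∅, fun s => by simp, ?_⟩⟩
    intro i j hij
    exact absurd i.isLt (by omega)


def cExt {n : ℕ} (m : ℕ) (e : Fin m → Finset (Fin n × Fin n)) (t : ℕ) :
    Finset (Fin n × Fin n) :=
  if h : t < m then e ⟨t, h⟩ else ∅

def atomSet {n : ℕ} {Ω : Type*} (𝓔 : ℕ → Ω → Finset (Fin n × Fin n)) (m : ℕ)
    (e : Fin m → Finset (Fin n × Fin n)) : Set Ω :=
  ⋂ t ∈ Finset.range m, 𝓔 t ⁻¹' {cExt m e t}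

def BadSet {n d : ℕ} (r : Fin n → ℝ) {Ω : Type*} (𝓔 : ℕ → Ω → Finset (Fin n × Fin n))
    (x0 : Fin n → EuclideanSpace ℝ (Fin d)) (m : ℕ) : Set Ω :=
  {ω | ¬ IsEquilib r (traj r (fun s => 𝓔 s ω) x0 m)}

def badF {n d : ℕ} (r : Fin n → ℝ) (x0 : Fin n → EuclideanSpace ℝ (Fin d)) (m : ℕ) :
    Finset (Fin m → Finset (Fin n × Fin n)) :=
  Finset.univ.filter (fun e => ¬ IsEquilib r (traj r (cExt m e) x0 m))


end RIBC

open RIBC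

/-- Convergence of the RIBC system: almost surely the opinions reach, in
finite time, a fixed state in which any two agents' opinions are either equal or farther
apart than both confidence bounds. -/
theorem ribc_finite_time_convergence
    {n d : ℕ} (hn : 3 ≤ n) (hd : 1 ≤ d)
    (r : Fin n → ℝ) (hrpos : ∀ i, 0 < r i)
    (hrmono : ∀ i j : Fin n, i ≤ j → r j ≤ r i)
    (hrn : r ⟨n - 1, by omega⟩ < 2)
    {Ω : Type*} [MeasurableSpace Ω] (P : Measure Ω) [IsProbabilityMeasure P]
    (𝓔 : ℕ → Ω → Finset (Fin n × Fin n)) (h𝓔meas : ∀ t, Measurable (𝓔 t))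
    (h𝓔sub : ∀ t ω, 𝓔 t ω ⊆ (Finset.univ : Finset (Fin n)).offDiag)
    (h𝓔indep : iIndepFun 𝓔 P)
    (δ : ℝ) (hδ : δ ∈ Set.Ioo (0 : ℝ) 1)
    (h𝓔low : ∀ (t : ℕ) (F : Finset (Fin n × Fin n)),
      F ⊆ (Finset.univ : Finset (Fin n)).offDiag →
      ENNReal.ofReal δ ≤ P {ω | 𝓔 t ω = F})
    (x0 : Fin n → EuclideanSpace ℝ (Fin d)) (hx0 : ∀ i, ‖x0 i‖ ≤ 1) :
    ∀ᵐ ω ∂P, ∃ (τ : ℕ) (xs : Fin n → EuclideanSpace ℝ (Fin d)),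
      (∀ i, ‖xs i‖ ≤ 1) ∧
      (∀ t, τ ≤ t → traj r (fun s => 𝓔 s ω) x0 t = xs) ∧
      (∀ i j : Fin n, i ≠ j →
        xs i = xs j ∨ max (r i) (r j) < ‖xs i - xs j‖) := by
  -- the minimal confidence bound
  have hρ : 0 < r ⟨n - 1, by omega⟩ := hrpos _
  have hρr : ∀ k, r ⟨n - 1, by omega⟩ ≤ r k := by
    intro k
    exact hrmono k ⟨n - 1, by omega⟩ (by
      rw [Fin.le_def]
      have := k.isLt
      simp only
      omega)
  obtain ⟨L, hL⟩ := ctrl (d := d) r hρ hρr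
  set q : ENNReal := ENNReal.ofReal δ ^ L with hq
  have hq0 : q ≠ 0 := pow_ne_zero _ (ENNReal.ofReal_pos.mpr hδ.1).ne'
  have hq1 : q ≤ 1 := pow_le_one₀ zero_le' (ENNReal.ofReal_le_one.mpr hδ.2.le)
  have hatom_mem : ∀ (m : ℕ) (e : Fin m → Finset (Fin n × Fin n)) ω,
      ω ∈ atomSet 𝓔 m e ↔ ∀ t, (ht : t < m) → 𝓔 t ω = e ⟨t, ht⟩ := by
    intro m e ω
    simp only [atomSet, Set.mem_iInter, Finset.mem_range, Set.mem_preimage,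
      Set.mem_singleton_iff]
    constructor
    · intro h t ht
      have := h t ht
      rwa [cExt, dif_pos ht] at this
    · intro h t ht
      rw [cExt, dif_pos ht]
      exact h t ht
  have hatom_meas : ∀ (m : ℕ) (e : Fin m → Finset (Fin n × Fin n)),
      MeasurableSet (atomSet 𝓔 m e) := by
    intro m e
    apply MeasurableSet.biInter (Set.to_countable _)
    intro t _
    exact h𝓔meas t MeasurableSpace.measurableSet_top
  have hatom_self : ∀ (m : ℕ) ω, ω ∈ atomSet 𝓔 m (fun t => 𝓔 t ω) := by
    intro m ω
    rw [hatom_mem]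
    intro t ht
    rfl
  have hatom_prob : ∀ (m : ℕ) (e : Fin m → Finset (Fin n × Fin n)),
      P (atomSet 𝓔 m e) = ∏ t ∈ Finset.range m, P (𝓔 t ⁻¹' {cExt m e t}) := by
    intro m e
    exact h𝓔indep.meas_biInter (fun t _ => ⟨{cExt m e t}, trivial, rfl⟩)
  have hatom_traj : ∀ (m : ℕ) (e : Fin m → Finset (Fin n × Fin n)) ω, ω ∈ atomSet 𝓔 m e →
      traj r (fun s => 𝓔 s ω) x0 m = traj r (cExt m e) x0 m := by
    intro m e ω hω
    apply traj_congr
    intro s hs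
    rw [cExt, dif_pos hs]
    exact (hatom_mem m e ω).mp hω s hs
  have hBadUnion : ∀ k : ℕ, BadSet r 𝓔 x0 (k * L)
      = ⋃ e ∈ badF r x0 (k * L), atomSet 𝓔 (k * L) e := by
    intro k
    ext ω
    simp only [BadSet, Set.mem_setOf_eq, Set.mem_iUnion]
    constructor
    · intro hω
      refine ⟨fun t => 𝓔 t ω, ?_, hatom_self _ ω⟩
      rw [badF, Finset.mem_filter]
      refine ⟨Finset.mem_univ _, ?_⟩
      rwa [← hatom_traj _ _ ω (hatom_self _ ω)]
    · rintro ⟨e, he, hω⟩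
      rw [badF, Finset.mem_filter] at he
      rw [hatom_traj _ e ω hω]
      exact he.2
  have hatom_disj : ∀ (m : ℕ), Set.Pairwise ((Finset.univ :
      Finset (Fin m → Finset (Fin n × Fin n))) : Set _)
      (fun e e' => Disjoint (atomSet 𝓔 m e) (atomSet 𝓔 m e')) := by
    intro m e _ e' _ hne
    rw [Set.disjoint_left]
    intro ω hω hω'
    apply hne
    funext t
    have h1 := (hatom_mem m e ω).mp hω t.val t.isLt
    have h2 := (hatom_mem m e' ω).mp hω' t.val t.isLt
    rw [Fin.eta] at h1 h2
    rw [← h1, ← h2]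
  -- the one-block contraction
  have key : ∀ k : ℕ, P (BadSet r 𝓔 x0 ((k + 1) * L)) ≤ (1 - q) * P (BadSet r 𝓔 x0 (k * L)) := by
    intro k
    set m := k * L with hm
    have hmL : (k + 1) * L = m + L := by rw [hm]; ring
    have hgood : ∀ e, e ∉ badF r x0 m → BadSet r 𝓔 x0 ((k + 1) * L) ∩ atomSet 𝓔 m e = ∅ := by
      intro e he
      rw [badF, Finset.mem_filter, not_and, not_not] at he
      have he' := he (Finset.mem_univ _)
      ext ω
      simp only [Set.mem_inter_iff, Set.mem_empty_iff_false, iff_false, not_and]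
      intro hbad hω
      rw [BadSet, Set.mem_setOf_eq] at hbad
      apply hbad
      have h1 : traj r (fun s => 𝓔 s ω) x0 m = traj r (cExt m e) x0 m :=
        hatom_traj m e ω hω
      have h2 : IsEquilib r (traj r (fun s => 𝓔 s ω) x0 m) := by rw [h1]; exact he'
      rw [hmL, traj_of_equilib r h2 L]
      exact h2
    have hbadbound : ∀ e ∈ badF r x0 m,
        P (BadSet r 𝓔 x0 ((k + 1) * L) ∩ atomSet 𝓔 m e) ≤ (1 - q) * P (atomSet 𝓔 m e) := by
      intro e he
      set xe := traj r (cExt m e) x0 m with hxe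
      have hxe1 : ∀ i, ‖xe i‖ ≤ 1 := fun i => traj_norm_le r hx0 m i
      obtain ⟨Es, hEsub, hEq⟩ := hL xe hxe1
      set g : Fin (m + L) → Finset (Fin n × Fin n) :=
        fun t => if h : (t : ℕ) < m then e ⟨t, h⟩ else Es ((t : ℕ) - m) with hg
      have hgc : ∀ t, (ht : t < m) → cExt (m + L) g t = cExt m e t := by
        intro t ht
        rw [cExt, cExt, dif_pos (by omega : t < m + L), dif_pos ht, hg]
        simp only
        rw [dif_pos ht]
      have hgE : ∀ s, (hs : s < L) → cExt (m + L) g (m + s) = Es s := by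
        intro s hs
        rw [cExt, dif_pos (by omega : m + s < m + L), hg]
        simp only
        rw [dif_neg (by omega : ¬ (m + s < m))]
        congr 1
        omega
      have hsubset : atomSet 𝓔 (m + L) g ⊆ atomSet 𝓔 m e := by
        intro ω hω
        rw [hatom_mem] at hω ⊢
        intro t ht
        have h1 := hω t (by omega)
        have h2 : cExt (m + L) g t = cExt m e t := hgc t ht
        rw [cExt, cExt, dif_pos (by omega : t < m + L), dif_pos ht] at h2
        rw [h1]
        exact h2
      have hbig : q * P (atomSet 𝓔 m e) ≤ P (atomSet 𝓔 (m + L) g) := by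
        rw [hatom_prob (m + L) g, Finset.prod_range_add]
        have h1 : ∏ t ∈ Finset.range m, P (𝓔 t ⁻¹' {cExt (m + L) g t})
            = P (atomSet 𝓔 m e) := by
          rw [hatom_prob m e]
          apply Finset.prod_congr rfl
          intro t ht
          rw [hgc t (Finset.mem_range.mp ht)]
        have h2 : q ≤ ∏ s ∈ Finset.range L, P (𝓔 (m + s) ⁻¹' {cExt (m + L) g (m + s)}) := by
          rw [hq]
          calc (ENNReal.ofReal δ) ^ L = ∏ _s ∈ Finset.range L, ENNReal.ofReal δ := by
                rw [Finset.prod_const, Finset.card_range]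
            _ ≤ _ := by
                apply Finset.prod_le_prod'
                intro s hs
                rw [hgE s (Finset.mem_range.mp hs)]
                exact h𝓔low (m + s) (Es s) (hEsub s)
        rw [h1, mul_comm]
        exact mul_le_mul' le_rfl h2
      have hclaim : BadSet r 𝓔 x0 ((k + 1) * L) ∩ atomSet 𝓔 m e
          ⊆ atomSet 𝓔 m e \ atomSet 𝓔 (m + L) g := by
        rintro ω ⟨hbad, hω⟩
        refine ⟨hω, fun hbigω => ?_⟩
        rw [BadSet, Set.mem_setOf_eq] at hbad
        apply hbad
        rw [hmL, traj_add]
        have h1 : traj r (fun s => 𝓔 s ω) x0 m = xe := (hatom_traj m e ω hω)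
        rw [h1]
        have h2 : traj r (fun s => 𝓔 (s + m) ω) xe L = traj r Es xe L := by
          apply traj_congr
          intro s hs
          have hmem := (hatom_mem (m + L) g ω).mp hbigω (s + m) (by omega)
          rw [hmem, hg]
          simp only
          rw [dif_neg (by omega : ¬ (s + m < m))]
          congr 1
          omega
        rw [h2]
        exact hEq
      calc P (BadSet r 𝓔 x0 ((k + 1) * L) ∩ atomSet 𝓔 m e)
          ≤ P (atomSet 𝓔 m e \ atomSet 𝓔 (m + L) g) := measure_mono hclaim
        _ = P (atomSet 𝓔 m e) - P (atomSet 𝓔 (m + L) g) :=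
            measure_diff hsubset (hatom_meas _ _).nullMeasurableSet (measure_ne_top P _)
        _ ≤ P (atomSet 𝓔 m e) - q * P (atomSet 𝓔 m e) := tsub_le_tsub_left hbig _
        _ = (1 - q) * P (atomSet 𝓔 m e) := by
            rw [ENNReal.sub_mul (fun _ _ => measure_ne_top P _), one_mul]
    have hcover : BadSet r 𝓔 x0 ((k + 1) * L) ⊆ ⋃ e ∈ (Finset.univ :
        Finset (Fin m → Finset (Fin n × Fin n))),
          BadSet r 𝓔 x0 ((k + 1) * L) ∩ atomSet 𝓔 m e := by
      intro ω hω
      rw [Set.mem_iUnion]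
      exact ⟨fun t => 𝓔 t ω, Set.mem_iUnion.mpr ⟨Finset.mem_univ _,
        ⟨hω, hatom_self m ω⟩⟩⟩
    calc P (BadSet r 𝓔 x0 ((k + 1) * L)) ≤
        ∑ e ∈ (Finset.univ : Finset (Fin m → Finset (Fin n × Fin n))),
          P (BadSet r 𝓔 x0 ((k + 1) * L) ∩ atomSet 𝓔 m e) :=
          (measure_mono hcover).trans (measure_biUnion_finset_le _ _)
      _ = ∑ e ∈ badF r x0 m, P (BadSet r 𝓔 x0 ((k + 1) * L) ∩ atomSet 𝓔 m e) := by
          rw [eq_comm]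
          apply Finset.sum_subset (Finset.subset_univ _)
          intro e _ he
          rw [hgood e he, measure_empty]
      _ ≤ ∑ e ∈ badF r x0 m, (1 - q) * P (atomSet 𝓔 m e) := Finset.sum_le_sum hbadbound
      _ = (1 - q) * ∑ e ∈ badF r x0 m, P (atomSet 𝓔 m e) := by rw [Finset.mul_sum]
      _ = (1 - q) * P (BadSet r 𝓔 x0 (k * L)) := by
          rw [hBadUnion k, measure_biUnion_finset
            ((hatom_disj m).mono (by intro e he; exact Finset.mem_coe.mpr (Finset.mem_univ _)))
            (fun e _ => hatom_meas m e)]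
  -- geometric decay
  have decay : ∀ k : ℕ, P (BadSet r 𝓔 x0 (k * L)) ≤ (1 - q) ^ k := by
    intro k
    induction k with
    | zero => simpa using prob_le_one
    | succ k ih =>
        calc P (BadSet r 𝓔 x0 ((k + 1) * L)) ≤ (1 - q) * P (BadSet r 𝓔 x0 (k * L)) := key k
          _ ≤ (1 - q) * (1 - q) ^ k := mul_le_mul' le_rfl ih
          _ = (1 - q) ^ (k + 1) := by rw [pow_succ, mul_comm]
  have hlt1 : (1 : ENNReal) - q < 1 :=
    ENNReal.sub_lt_self ENNReal.one_ne_top one_ne_zero hq0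
  have hnull : P (⋂ k, BadSet r 𝓔 x0 (k * L)) = 0 := by
    have htend : Filter.Tendsto (fun k => ((1 : ENNReal) - q) ^ k)
        Filter.atTop (nhds 0) := ENNReal.tendsto_pow_atTop_nhds_zero_of_lt_one hlt1
    have hle : ∀ k, P (⋂ k, BadSet r 𝓔 x0 (k * L)) ≤ ((1 : ENNReal) - q) ^ k := fun k =>
      (measure_mono (Set.iInter_subset _ k)).trans (decay k)
    exact le_antisymm (le_of_tendsto_of_tendsto' tendsto_const_nhds htend hle) zero_le'
  have hae : ∀ᵐ ω ∂P, ∃ k, IsEquilib r (traj r (fun s => 𝓔 s ω) x0 (k * L)) := by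
    have hsub2 : {ω | ¬ ∃ k, IsEquilib r (traj r (fun s => 𝓔 s ω) x0 (k * L))}
        ⊆ ⋂ k, BadSet r 𝓔 x0 (k * L) := by
      intro ω hω
      rw [Set.mem_setOf_eq] at hω
      push_neg at hω
      exact Set.mem_iInter.mpr (fun k => hω k)
    rw [ae_iff]
    exact measure_mono_null hsub2 hnull
  filter_upwards [hae] with ω hω
  obtain ⟨k, hk⟩ := hω
  refine ⟨k * L, traj r (fun s => 𝓔 s ω) x0 (k * L),
    fun i => traj_norm_le r hx0 _ i, ?_, hk⟩
  intro t ht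
  have heq : t = k * L + (t - k * L) := by omega
  rw [heq, traj_of_equilib r hk]
end
end

section
/- Consider the RIBC system with n ≥ 3 agents, confidence bounds r_1 ≥ r_2 ≥ ⋯ ≥ r_n > 0, and random edge sets that are independent across times and satisfy P(E_t = 𝓔) ≥ δ for every 𝓔 ⊆ A and every t, for some δ ∈ (0,1). If the largest confidence bound satisfies r_1 ≥ 2, then for every deterministic initial state x(0) with ‖x_i(0)‖ ≤ 1 for all i, almost surely there exists a finite (random) time τ such that for all t ≥ τ all agents share the same opinion: x_i(t) = x_j(t) for all i, j. -/
open Finset MeasureTheory ProbabilityTheory Metric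

noncomputable section

open scoped Classical

variable {n d : ℕ}

lemma step_norm_le (r : Fin n → ℝ) (E : Finset (Fin n × Fin n))
    (x : Fin n → EuclideanSpace ℝ (Fin d)) (h : ∀ i, ‖x i‖ ≤ 1) (i : Fin n) :
    ‖step r E x i‖ ≤ 1 := by
  have hk : (0:ℝ) < 1 + (nbr r E x i).card := by positivity
  rw [step, norm_smul]
  have h1 : ‖x i + ∑ j ∈ nbr r E x i, x j‖ ≤ 1 + (nbr r E x i).card := by
    calc ‖x i + ∑ j ∈ nbr r E x i, x j‖ ≤ ‖x i‖ + ‖∑ j ∈ nbr r E x i, x j‖ := norm_add_le _ _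
    _ ≤ 1 + ∑ j ∈ nbr r E x i, ‖x j‖ := by
        gcongr; · exact h i
        · exact norm_sum_le _ _
    _ ≤ 1 + ∑ j ∈ nbr r E x i, (1:ℝ) := by gcongr with j hj; exact h j
    _ = 1 + (nbr r E x i).card := by simp
  calc ‖((1 : ℝ) + (nbr r E x i).card)⁻¹‖ * ‖x i + ∑ j ∈ nbr r E x i, x j‖
      ≤ ((1 : ℝ) + (nbr r E x i).card)⁻¹ * (1 + (nbr r E x i).card) := by
        rw [Real.norm_eq_abs, abs_of_pos (by positivity)]
        exact mul_le_mul_of_nonneg_left h1 (by positivity)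
    _ = 1 := inv_mul_cancel₀ (ne_of_gt hk)

lemma nbr_single_src (r : Fin n → ℝ) (a b : Fin n) (hba : b ≠ a)
    (x : Fin n → EuclideanSpace ℝ (Fin d)) (hd : ‖x a - x b‖ ≤ r a) :
    nbr r {(a,b)} x a = {b} := by
  ext j
  simp only [nbr, Finset.mem_filter, Finset.mem_univ, true_and, Finset.mem_singleton,
    Prod.mk.injEq]
  constructor
  · tauto
  · rintro rfl; refine ⟨hba, ?_, hd⟩ <;> tauto

lemma nbr_single_other (r : Fin n → ℝ) (a b i : Fin n) (hia : i ≠ a)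
    (x : Fin n → EuclideanSpace ℝ (Fin d)) :
    nbr r {(a,b)} x i = ∅ := by
  ext j
  simp only [nbr, Finset.mem_filter, Finset.mem_univ, true_and, Finset.mem_singleton,
    Prod.mk.injEq, Finset.notMem_empty, iff_false]
  rintro ⟨_, ⟨rfl, rfl⟩, _⟩
  exact hia rfl

lemma step_single_src (r : Fin n → ℝ) (a b : Fin n) (hba : b ≠ a)
    (x : Fin n → EuclideanSpace ℝ (Fin d)) (hd : ‖x a - x b‖ ≤ r a) :
    step r {(a,b)} x a = (2:ℝ)⁻¹ • (x a + x b) := by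
  rw [step, nbr_single_src r a b hba x hd]
  norm_num

lemma step_single_other (r : Fin n → ℝ) (a b i : Fin n) (hia : i ≠ a)
    (x : Fin n → EuclideanSpace ℝ (Fin d)) :
    step r {(a,b)} x i = x i := by
  rw [step, nbr_single_other r a b i hia x]
  simp

lemma step_const (r : Fin n → ℝ) (E : Finset (Fin n × Fin n))
    (x : Fin n → EuclideanSpace ℝ (Fin d)) (h : ∀ i j, x i = x j) (i : Fin n) :
    step r E x i = x i := by
  rw [step]
  have hs : ∑ j ∈ nbr r E x i, x j = ((nbr r E x i).card : ℝ) • x i := by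
    rw [Finset.sum_congr rfl (fun j _ => h j i), Finset.sum_const, (Nat.cast_smul_eq_nsmul ℝ _ _).symm]
  rw [hs]
  have : x i + ((nbr r E x i).card : ℝ) • x i = ((1:ℝ) + (nbr r E x i).card) • x i := by
    rw [add_smul, one_smul]
  rw [this, smul_smul, inv_mul_cancel₀ (by positivity), one_smul]

lemma nbr_offDiag (r : Fin n → ℝ) (x : Fin n → EuclideanSpace ℝ (Fin d)) (i : Fin n)
    (h : ∀ j, ‖x i - x j‖ ≤ r i) :
    nbr r Finset.univ.offDiag x i = Finset.univ.erase i := by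
  ext j
  simp only [nbr, Finset.mem_filter, Finset.mem_univ, true_and, Finset.mem_offDiag,
    Finset.mem_erase]
  constructor
  · tauto
  · intro h1; refine ⟨h1.1, ?_, h j⟩; exact fun e => h1.1 e.symm

lemma step_offDiag (hn : 0 < n) (r : Fin n → ℝ) (x : Fin n → EuclideanSpace ℝ (Fin d))
    (h : ∀ i j, ‖x i - x j‖ ≤ r i) (i : Fin n) :
    step r Finset.univ.offDiag x i = (n:ℝ)⁻¹ • ∑ j, x j := by
  rw [step, nbr_offDiag r x i (h i)]
  have hc : (Finset.univ.erase i).card = n - 1 := by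
    rw [Finset.card_erase_of_mem (Finset.mem_univ i), Finset.card_univ, Fintype.card_fin]
  have hsum : x i + ∑ j ∈ Finset.univ.erase i, x j = ∑ j, x j :=
    Finset.add_sum_erase _ _ (Finset.mem_univ i)
  rw [hc, hsum]
  congr 1
  have : ((n:ℝ) - 1 : ℝ) = ((n-1 : ℕ) : ℝ) := by
    rw [Nat.cast_sub hn]; norm_num
  rw [← this]
  ring_nf

def run (r : Fin n → ℝ) (l : List (Finset (Fin n × Fin n)))
    (x : Fin n → EuclideanSpace ℝ (Fin d)) : Fin n → EuclideanSpace ℝ (Fin d) :=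
  l.foldl (fun y E => step r E y) x

@[simp] lemma run_nil (r : Fin n → ℝ) (x : Fin n → EuclideanSpace ℝ (Fin d)) :
    run r ([]) x = x := rfl

lemma run_cons (r : Fin n → ℝ) (E : Finset (Fin n × Fin n)) (l : List (Finset (Fin n × Fin n)))
    (x : Fin n → EuclideanSpace ℝ (Fin d)) :
    run r (E :: l) x = run r l (step r E x) := rfl

lemma run_append (r : Fin n → ℝ) (l1 l2 : List (Finset (Fin n × Fin n)))
    (x : Fin n → EuclideanSpace ℝ (Fin d)) :
    run r (l1 ++ l2) x = run r l2 (run r l1 x) := by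
  simp [run, List.foldl_append]

lemma run_ball (r : Fin n → ℝ) (l : List (Finset (Fin n × Fin n)))
    (x : Fin n → EuclideanSpace ℝ (Fin d)) (hx : ∀ i, ‖x i‖ ≤ 1) :
    ∀ i, ‖run r l x i‖ ≤ 1 := by
  induction l generalizing x with
  | nil => exact hx
  | cons E l ih => exact fun i => (ih _ (step_norm_le r E x hx)) i

lemma run_replicate (r : Fin n → ℝ) (a b : Fin n) (hba : b ≠ a) (hra : 2 ≤ r a) (K : ℕ)
    (x : Fin n → EuclideanSpace ℝ (Fin d)) (hx : ∀ i, ‖x i‖ ≤ 1) :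
    (run r (List.replicate K {(a,b)}) x a = x b + ((2:ℝ)⁻¹)^K • (x a - x b)) ∧
    (∀ i, i ≠ a → run r (List.replicate K {(a,b)}) x i = x i) := by
  induction K generalizing x with
  | zero => constructor <;> simp [run]
  | succ K ih =>
    have hd : ‖x a - x b‖ ≤ r a := by
      calc ‖x a - x b‖ ≤ ‖x a‖ + ‖x b‖ := norm_sub_le _ _
      _ ≤ 2 := by linarith [hx a, hx b]
      _ ≤ r a := hra
    set y := step r {(a,b)} x with hy
    have hya : y a = (2:ℝ)⁻¹ • (x a + x b) := step_single_src r a b hba x hd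
    have hyi : ∀ i, i ≠ a → y i = x i := fun i hia => step_single_other r a b i hia x
    have hyb : y b = x b := hyi b hba
    obtain ⟨h1, h2⟩ := ih y (step_norm_le r _ x hx)
    rw [List.replicate_succ]
    constructor
    · rw [run_cons, ← hy, h1, hyb, hya]
      rw [pow_succ]
      module
    · intro i hia
      rw [run_cons, ← hy, h2 i hia, hyi i hia]

def pullL (a0 lst j : Fin n) (K : ℕ) : List (Finset (Fin n × Fin n)) :=
  List.replicate K {(a0,lst)} ++ (List.replicate K {(a0,j)} ++ [{(j,a0)}])

lemma run_pull (r : Fin n → ℝ) (a0 lst j : Fin n) (hj0 : j ≠ a0) (hl0 : lst ≠ a0)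
    (hjl : j ≠ lst) (hra : 2 ≤ r a0) (K : ℕ) (hK : 2 * ((2:ℝ)⁻¹)^K ≤ r j)
    (x : Fin n → EuclideanSpace ℝ (Fin d)) (hx : ∀ i, ‖x i‖ ≤ 1) :
    (∀ i, ‖run r (pullL a0 lst j K) x i‖ ≤ 1) ∧
    (∀ i, i ≠ a0 → i ≠ j → run r (pullL a0 lst j K) x i = x i) ∧
    ‖run r (pullL a0 lst j K) x j - x lst‖ ≤
      (1 - ((2:ℝ)⁻¹)^(K+1)) * ‖x j - x lst‖ + ((2:ℝ)⁻¹)^(K+1) * (2 * ((2:ℝ)⁻¹)^K) := by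
  have hball := run_ball r (pullL a0 lst j K) x hx
  set x1 := run r (List.replicate K {(a0,lst)}) x with hx1def
  have hx1ball : ∀ i, ‖x1 i‖ ≤ 1 := run_ball r _ x hx
  obtain ⟨hx1a, hx1o⟩ := run_replicate r a0 lst hl0 hra K x hx
  rw [← hx1def] at hx1a hx1o
  set x2 := run r (List.replicate K {(a0,j)}) x1 with hx2def
  have hx2ball : ∀ i, ‖x2 i‖ ≤ 1 := run_ball r _ x1 hx1ball
  obtain ⟨hx2a, hx2o⟩ := run_replicate r a0 j hj0 hra K x1 hx1ball
  rw [← hx2def] at hx2a hx2o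
  have hx1j : x1 j = x j := hx1o j hj0
  have hx2j : x2 j = x j := by rw [hx2o j hj0, hx1j]
  have hx2a' : x2 a0 = x j + ((2:ℝ)⁻¹)^K • (x1 a0 - x j) := by rw [hx2a, hx1j]
  -- the merge step fires
  have hdist : ‖x2 j - x2 a0‖ ≤ r j := by
    have : x2 j - x2 a0 = -(((2:ℝ)⁻¹)^K • (x1 a0 - x j)) := by rw [hx2j, hx2a']; module
    rw [this, norm_neg, norm_smul, Real.norm_eq_abs, abs_of_pos (by positivity)]
    have h2 : ‖x1 a0 - x j‖ ≤ 2 := by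
      calc ‖x1 a0 - x j‖ ≤ ‖x1 a0‖ + ‖x j‖ := norm_sub_le _ _
      _ ≤ 2 := by linarith [hx1ball a0, hx j]
    calc ((2:ℝ)⁻¹)^K * ‖x1 a0 - x j‖ ≤ ((2:ℝ)⁻¹)^K * 2 := by
          exact mul_le_mul_of_nonneg_left h2 (by positivity)
      _ = 2 * ((2:ℝ)⁻¹)^K := by ring
      _ ≤ r j := hK
  have hrun : run r (pullL a0 lst j K) x = step r {(j,a0)} x2 := by
    rw [pullL, run_append, run_append, ← hx1def, ← hx2def, run_cons, run_nil]
  have hyj : run r (pullL a0 lst j K) x j = (2:ℝ)⁻¹ • (x2 j + x2 a0) := by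
    rw [hrun]; exact step_single_src r j a0 (Ne.symm hj0) x2 hdist
  have hyo : ∀ i, i ≠ j → run r (pullL a0 lst j K) x i = x2 i := by
    intro i hij; rw [hrun]; exact step_single_other r j a0 i hij x2
  refine ⟨hball, ?_, ?_⟩
  · intro i hi0 hij
    rw [hyo i hij, hx2o i hi0, hx1o i hi0]
  · have key : run r (pullL a0 lst j K) x j - x lst =
        (1 - ((2:ℝ)⁻¹)^(K+1)) • (x j - x lst) + ((2:ℝ)⁻¹)^(K+1) • (x1 a0 - x lst) := by
      rw [hyj, hx2j, hx2a', pow_succ]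
      module
    have hx1al : x1 a0 - x lst = ((2:ℝ)⁻¹)^K • (x a0 - x lst) := by rw [hx1a]; module
    have hn1 : ‖x1 a0 - x lst‖ ≤ 2 * ((2:ℝ)⁻¹)^K := by
      rw [hx1al, norm_smul, Real.norm_eq_abs, abs_of_pos (by positivity)]
      have h2 : ‖x a0 - x lst‖ ≤ 2 := by
        calc ‖x a0 - x lst‖ ≤ ‖x a0‖ + ‖x lst‖ := norm_sub_le _ _
        _ ≤ 2 := by linarith [hx a0, hx lst]
      calc ((2:ℝ)⁻¹)^K * ‖x a0 - x lst‖ ≤ ((2:ℝ)⁻¹)^K * 2 :=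
            mul_le_mul_of_nonneg_left h2 (by positivity)
        _ = 2 * ((2:ℝ)⁻¹)^K := by ring
    have hβ : (0:ℝ) ≤ ((2:ℝ)⁻¹)^(K+1) := by positivity
    have hβ1 : ((2:ℝ)⁻¹)^(K+1) ≤ 1 := by
      apply pow_le_one₀ <;> norm_num
    calc ‖run r (pullL a0 lst j K) x j - x lst‖
        ≤ ‖(1 - ((2:ℝ)⁻¹)^(K+1)) • (x j - x lst)‖ + ‖((2:ℝ)⁻¹)^(K+1) • (x1 a0 - x lst)‖ := by
          rw [key]; exact norm_add_le _ _
      _ = (1 - ((2:ℝ)⁻¹)^(K+1)) * ‖x j - x lst‖ + ((2:ℝ)⁻¹)^(K+1) * ‖x1 a0 - x lst‖ := by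
          rw [norm_smul, norm_smul, Real.norm_eq_abs, Real.norm_eq_abs,
            abs_of_nonneg (by linarith), abs_of_nonneg hβ]
      _ ≤ (1 - ((2:ℝ)⁻¹)^(K+1)) * ‖x j - x lst‖ + ((2:ℝ)⁻¹)^(K+1) * (2 * ((2:ℝ)⁻¹)^K) := by
          gcongr

def procL (a0 lst j : Fin n) (K M : ℕ) : List (Finset (Fin n × Fin n)) :=
  (List.replicate M (pullL a0 lst j K)).flatten

lemma run_proc (r : Fin n → ℝ) (a0 lst j : Fin n) (hj0 : j ≠ a0) (hl0 : lst ≠ a0)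
    (hjl : j ≠ lst) (hra : 2 ≤ r a0) (K : ℕ) (hK : 2 * ((2:ℝ)⁻¹)^K ≤ r j) (M : ℕ)
    (x : Fin n → EuclideanSpace ℝ (Fin d)) (hx : ∀ i, ‖x i‖ ≤ 1) :
    (∀ i, ‖run r (procL a0 lst j K M) x i‖ ≤ 1) ∧
    (∀ i, i ≠ a0 → i ≠ j → run r (procL a0 lst j K M) x i = x i) ∧
    ‖run r (procL a0 lst j K M) x j - x lst‖ ≤
      (1 - ((2:ℝ)⁻¹)^(K+1))^M * ‖x j - x lst‖ + 2 * ((2:ℝ)⁻¹)^K := by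
  have hβ0 : (0:ℝ) ≤ ((2:ℝ)⁻¹)^(K+1) := by positivity
  have hβ1 : ((2:ℝ)⁻¹)^(K+1) ≤ 1 := by apply pow_le_one₀ <;> norm_num
  induction M generalizing x with
  | zero =>
    refine ⟨hx, fun i _ _ => rfl, ?_⟩
    simp only [procL, List.replicate, List.flatten_nil, run_nil, pow_zero, one_mul]
    have : (0:ℝ) ≤ 2 * ((2:ℝ)⁻¹)^K := by positivity
    linarith
  | succ M ih =>
    have hsplit : procL a0 lst j K (M+1) = procL a0 lst j K M ++ pullL a0 lst j K := by
      rw [procL, List.replicate_succ']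
      simp [procL]
    obtain ⟨ihball, ihother, ihdist⟩ := ih x hx
    set z := run r (procL a0 lst j K M) x with hzdef
    have hzlst : z lst = x lst := ihother lst hl0 (Ne.symm hjl)
    obtain ⟨pball, pother, pdist⟩ := run_pull r a0 lst j hj0 hl0 hjl hra K hK z ihball
    have hrun : run r (procL a0 lst j K (M+1)) x = run r (pullL a0 lst j K) z := by
      rw [hsplit, run_append, ← hzdef]
    refine ⟨?_, ?_, ?_⟩
    · intro i; rw [hrun]; exact pball i
    · intro i hi0 hij; rw [hrun, pother i hi0 hij]; exact ihother i hi0 hij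
    · rw [hrun]
      have h1 : ‖run r (pullL a0 lst j K) z j - x lst‖ ≤
          (1 - ((2:ℝ)⁻¹)^(K+1)) * ‖z j - x lst‖ + ((2:ℝ)⁻¹)^(K+1) * (2 * ((2:ℝ)⁻¹)^K) := by
        have := pdist; rw [hzlst] at this; exact this
      have h2 : ‖z j - x lst‖ ≤ (1 - ((2:ℝ)⁻¹)^(K+1))^M * ‖x j - x lst‖ + 2 * ((2:ℝ)⁻¹)^K :=
        ihdist
      have hβ' : (0:ℝ) ≤ 1 - ((2:ℝ)⁻¹)^(K+1) := by linarith
      calc ‖run r (pullL a0 lst j K) z j - x lst‖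
          ≤ (1 - ((2:ℝ)⁻¹)^(K+1)) * ((1 - ((2:ℝ)⁻¹)^(K+1))^M * ‖x j - x lst‖ +
              2 * ((2:ℝ)⁻¹)^K) + ((2:ℝ)⁻¹)^(K+1) * (2 * ((2:ℝ)⁻¹)^K) := by
            refine le_trans h1 ?_
            gcongr
        _ = (1 - ((2:ℝ)⁻¹)^(K+1))^(M+1) * ‖x j - x lst‖ + 2 * ((2:ℝ)⁻¹)^K := by
            rw [pow_succ]; ring

lemma run_middles (r : Fin n → ℝ) (a0 lst : Fin n) (hl0 : lst ≠ a0) (hra : 2 ≤ r a0)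
    (K M : ℕ) (hK : ∀ j : Fin n, 2 * ((2:ℝ)⁻¹)^K ≤ r j)
    (hM : (1 - ((2:ℝ)⁻¹)^(K+1))^M * 2 ≤ 2 * ((2:ℝ)⁻¹)^K) :
    ∀ (l : List (Fin n)), (∀ j ∈ l, j ≠ a0 ∧ j ≠ lst) →
      ∀ (x : Fin n → EuclideanSpace ℝ (Fin d)), (∀ i, ‖x i‖ ≤ 1) →
      (∀ i, ‖run r ((l.map (fun j => procL a0 lst j K M)).flatten) x i‖ ≤ 1) ∧
      (∀ i, i ≠ a0 → i ∉ l →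
        run r ((l.map (fun j => procL a0 lst j K M)).flatten) x i = x i) ∧
      (∀ j ∈ l, ‖run r ((l.map (fun j => procL a0 lst j K M)).flatten) x j - x lst‖ ≤
        2 * (2 * ((2:ℝ)⁻¹)^K)) := by
  intro l
  induction l with
  | nil => intro _ x hx; refine ⟨hx, fun i _ _ => rfl, by simp⟩
  | cons j rest ih =>
    intro hl x hx
    obtain ⟨hj0, hjl⟩ := hl j (List.mem_cons_self)
    have hrest : ∀ j' ∈ rest, j' ≠ a0 ∧ j' ≠ lst := fun j' hj' => hl j' (List.mem_cons_of_mem j hj')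
    have hsplit : (((j :: rest).map (fun j => procL a0 lst j K M)).flatten)
        = procL a0 lst j K M ++ ((rest.map (fun j => procL a0 lst j K M)).flatten) := by
      simp
    obtain ⟨yball, yother, ydist⟩ := run_proc r a0 lst j hj0 hl0 hjl hra K (hK j) M x hx
    set y := run r (procL a0 lst j K M) x with hydef
    have hrun : run r (((j :: rest).map (fun j => procL a0 lst j K M)).flatten) x
        = run r ((rest.map (fun j => procL a0 lst j K M)).flatten) y := by
      rw [hsplit, run_append, ← hydef]
    have hylst : y lst = x lst := yother lst hl0 (Ne.symm hjl)
    obtain ⟨zball, zother, zdist⟩ := ih hrest y yball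
    set z := run r ((rest.map (fun j => procL a0 lst j K M)).flatten) y with hzdef
    have hzlst : z lst = y lst := zother lst hl0 (fun h => (hrest lst h).2 rfl)
    refine ⟨?_, ?_, ?_⟩
    · intro i; rw [hrun]; exact zball i
    · intro i hi0 hil
      have hij : i ≠ j := fun h => hil (h ▸ List.mem_cons_self)
      have hir : i ∉ rest := fun h => hil (List.mem_cons_of_mem j h)
      rw [hrun, zother i hi0 hir]
      exact yother i hi0 hij
    · intro j' hj'
      rw [hrun]
      rcases List.mem_cons.mp hj' with rfl | hj'r
      · by_cases hjr : j' ∈ rest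
        · have := zdist j' hjr
          rw [hylst] at this; exact this
        · rw [zother j' hj0 hjr]
          have h2 : ‖x j' - x lst‖ ≤ 2 := by
            calc ‖x j' - x lst‖ ≤ ‖x j'‖ + ‖x lst‖ := norm_sub_le _ _
            _ ≤ 2 := by linarith [hx j', hx lst]
          have hβ0 : (0:ℝ) ≤ ((2:ℝ)⁻¹)^(K+1) := by positivity
          have hβ1 : ((2:ℝ)⁻¹)^(K+1) ≤ 1 := by apply pow_le_one₀ <;> norm_num
          have hβ' : (0:ℝ) ≤ 1 - ((2:ℝ)⁻¹)^(K+1) := by linarith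
          calc ‖y j' - x lst‖ ≤ (1 - ((2:ℝ)⁻¹)^(K+1))^M * ‖x j' - x lst‖ + 2 * ((2:ℝ)⁻¹)^K :=
                ydist
            _ ≤ (1 - ((2:ℝ)⁻¹)^(K+1))^M * 2 + 2 * ((2:ℝ)⁻¹)^K := by
                have := pow_nonneg hβ' M
                nlinarith [norm_nonneg (x j' - x lst)]
            _ ≤ 2 * ((2:ℝ)⁻¹)^K + 2 * ((2:ℝ)⁻¹)^K := by linarith
            _ = 2 * (2 * ((2:ℝ)⁻¹)^K) := by ring
      · have := zdist j' hj'r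
        rw [hylst] at this; exact this

lemma main_det (hn : 3 ≤ n) (r : Fin n → ℝ) (hrpos : ∀ i, 0 < r i)
    (hrmono : ∀ i j : Fin n, i ≤ j → r j ≤ r i) (hr1 : 2 ≤ r ⟨0, by omega⟩) :
    ∃ L : List (Finset (Fin n × Fin n)),
      (∀ E ∈ L, E ⊆ (Finset.univ : Finset (Fin n)).offDiag) ∧
      ∀ x : Fin n → EuclideanSpace ℝ (Fin d), (∀ i, ‖x i‖ ≤ 1) →
        ∀ i j, run r L x i = run r L x j := by
  have hn0 : 0 < n := by omega
  set a0 : Fin n := ⟨0, hn0⟩ with ha0def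
  set lst : Fin n := ⟨n-1, by omega⟩ with hlstdef
  have hl0 : lst ≠ a0 := by
    simp only [hlstdef, ha0def, ne_eq, Fin.mk.injEq]
    omega
  have hra0 : 2 ≤ r a0 := hr1
  have hρ : 0 < r lst := hrpos lst
  have hρr : ∀ i, r lst ≤ r i := by
    intro i
    refine hrmono i lst ?_
    rw [Fin.le_def]
    have := i.isLt
    simp only [hlstdef]
    omega
  obtain ⟨K, hKlt⟩ := exists_pow_lt_of_lt_one (show (0:ℝ) < r lst / 8 by positivity)
    (show (2:ℝ)⁻¹ < 1 by norm_num)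
  have hc : (0:ℝ) < ((2:ℝ)⁻¹)^K := by positivity
  have hK8 : 8 * ((2:ℝ)⁻¹)^K ≤ r lst := by linarith
  have hKr : ∀ j, 2 * ((2:ℝ)⁻¹)^K ≤ r j := fun j => le_trans (by linarith) (hρr j)
  have hβ0 : (0:ℝ) ≤ ((2:ℝ)⁻¹)^(K+1) := by positivity
  have hβp : (0:ℝ) < ((2:ℝ)⁻¹)^(K+1) := by positivity
  have hβ1 : ((2:ℝ)⁻¹)^(K+1) ≤ 1 := by apply pow_le_one₀ <;> norm_num
  obtain ⟨M, hMlt⟩ := exists_pow_lt_of_lt_one hc (show 1 - ((2:ℝ)⁻¹)^(K+1) < 1 by linarith)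
  have hM : (1 - ((2:ℝ)⁻¹)^(K+1))^M * 2 ≤ 2 * ((2:ℝ)⁻¹)^K := by nlinarith
  set middles : List (Fin n) := (List.finRange n).filter (fun j => j ≠ a0 ∧ j ≠ lst)
    with hmiddef
  have hmidmem : ∀ j ∈ middles, j ≠ a0 ∧ j ≠ lst := by
    intro j hj
    rw [hmiddef, List.mem_filter] at hj
    simpa using hj.2
  have hmidmem' : ∀ i : Fin n, i ≠ a0 → i ≠ lst → i ∈ middles := by
    intro i h1 h2
    rw [hmiddef, List.mem_filter]
    refine ⟨List.mem_finRange i, by simpa using ⟨h1, h2⟩⟩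
  have hsingle : ∀ (a b : Fin n), a ≠ b →
      ({(a,b)} : Finset (Fin n × Fin n)) ⊆ (Finset.univ : Finset (Fin n)).offDiag := by
    intro a b hab p hp
    rw [Finset.mem_singleton] at hp
    subst hp
    simp only [Finset.mem_offDiag, Finset.mem_univ, true_and]
    exact hab
  refine ⟨(middles.map (fun j => procL a0 lst j K M)).flatten ++
    (List.replicate K {(a0,lst)} ++ [(Finset.univ : Finset (Fin n)).offDiag]), ?_, ?_⟩
  · intro E hE
    simp only [List.mem_append, List.mem_flatten, List.mem_map, List.mem_replicate,
      List.mem_singleton] at hE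
    rcases hE with (⟨lE, ⟨j, hj, rfl⟩, hElE⟩ | (⟨_, rfl⟩ | rfl))
    · obtain ⟨hj0, hjl⟩ := hmidmem j hj
      rw [procL] at hElE
      simp only [List.mem_flatten, List.mem_replicate] at hElE
      obtain ⟨lE', ⟨_, rfl⟩, hE'⟩ := hElE
      rw [pullL] at hE'
      simp only [List.mem_append, List.mem_replicate, List.mem_singleton] at hE'
      rcases hE' with (⟨_, rfl⟩ | (⟨_, rfl⟩ | rfl))
      · exact hsingle a0 lst (Ne.symm hl0)
      · exact hsingle a0 j (Ne.symm hj0)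
      · exact hsingle j a0 hj0
    · exact hsingle a0 lst (Ne.symm hl0)
    · exact fun p hp => hp
  · intro x hx i j
    obtain ⟨zball, zother, zdist⟩ :=
      run_middles r a0 lst hl0 hra0 K M hKr hM middles hmidmem x hx
    set z := run r ((middles.map (fun j => procL a0 lst j K M)).flatten) x with hzdef
    have hzlst : z lst = x lst := zother lst hl0 (fun h => (hmidmem lst h).2 rfl)
    obtain ⟨hwa, hwo⟩ := run_replicate r a0 lst hl0 hra0 K z zball
    set w := run r (List.replicate K {(a0,lst)}) z with hwdef
    have hwball : ∀ i, ‖w i‖ ≤ 1 := run_ball r _ z zball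
    have hwlst : w lst = z lst := hwo lst hl0
    -- every agent is within 4*(2⁻¹)^K... of x lst
    have hclose : ∀ i, ‖w i - x lst‖ ≤ 4 * ((2:ℝ)⁻¹)^K := by
      intro i
      by_cases hi0 : i = a0
      · subst hi0
        have : w a0 - x lst = ((2:ℝ)⁻¹)^K • (z a0 - z lst) := by
          rw [hwa, hzlst]; module
        rw [this, norm_smul, Real.norm_eq_abs, abs_of_pos hc]
        have h2 : ‖z a0 - z lst‖ ≤ 2 := by
          calc ‖z a0 - z lst‖ ≤ ‖z a0‖ + ‖z lst‖ := norm_sub_le _ _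
          _ ≤ 2 := by linarith [zball a0, zball lst]
        nlinarith
      · rw [hwo i hi0]
        by_cases hil : i = lst
        · subst hil
          rw [hzlst]
          simp only [sub_self, norm_zero]
          positivity
        · have := zdist i (hmidmem' i hi0 hil)
          linarith
    have hpair : ∀ i j : Fin n, ‖w i - w j‖ ≤ r i := by
      intro i j
      calc ‖w i - w j‖ = ‖(w i - x lst) - (w j - x lst)‖ := by rw [sub_sub_sub_cancel_right]
      _ ≤ ‖w i - x lst‖ + ‖w j - x lst‖ := norm_sub_le _ _
      _ ≤ 8 * ((2:ℝ)⁻¹)^K := by linarith [hclose i, hclose j]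
      _ ≤ r lst := hK8
      _ ≤ r i := hρr i
    have hrunL : run r ((middles.map (fun j => procL a0 lst j K M)).flatten ++
        (List.replicate K {(a0,lst)} ++ [(Finset.univ : Finset (Fin n)).offDiag])) x
        = step r (Finset.univ : Finset (Fin n)).offDiag w := by
      rw [run_append, run_append, ← hzdef, ← hwdef, run_cons, run_nil]
    rw [hrunL, step_offDiag hn0 r w hpair i, step_offDiag hn0 r w hpair j]

lemma traj_ball (r : Fin n → ℝ) (E : ℕ → Finset (Fin n × Fin n))
    (x0 : Fin n → EuclideanSpace ℝ (Fin d)) (hx0 : ∀ i, ‖x0 i‖ ≤ 1) :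
    ∀ t i, ‖traj r E x0 t i‖ ≤ 1 := by
  intro t
  induction t with
  | zero => exact hx0
  | succ t ih => exact step_norm_le r (E t) _ ih

lemma traj_run (r : Fin n → ℝ) (E : ℕ → Finset (Fin n × Fin n))
    (x0 : Fin n → EuclideanSpace ℝ (Fin d)) (l : List (Finset (Fin n × Fin n))) (t0 : ℕ)
    (hE : ∀ k, (hk : k < l.length) → E (t0 + k) = l[k]) :
    traj r E x0 (t0 + l.length) = run r l (traj r E x0 t0) := by
  induction l generalizing t0 with
  | nil => simp
  | cons e l ih =>
    have h1 : t0 + (e :: l).length = (t0 + 1) + l.length := by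
      simp [List.length_cons]; omega
    rw [h1, ih (t0 + 1) (fun k hk => by
      have := hE (k+1) (by simpa using Nat.succ_lt_succ hk)
      have h2 : t0 + 1 + k = t0 + (k + 1) := by omega
      rw [h2, this]
      simp)]
    rw [run_cons]
    have h3 : traj r E x0 (t0 + 1) = step r (E t0) (traj r E x0 t0) := rfl
    rw [h3]
    have h4 : E t0 = e := hE 0 (by simp)
    rw [h4]

lemma traj_persist (r : Fin n → ℝ) (E : ℕ → Finset (Fin n × Fin n))
    (x0 : Fin n → EuclideanSpace ℝ (Fin d)) (t : ℕ)
    (h : ∀ i j, traj r E x0 t i = traj r E x0 t j) :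
    ∀ t', t ≤ t' → ∀ i j, traj r E x0 t' i = traj r E x0 t' j := by
  intro t' ht'
  induction t' with
  | zero => exact (Nat.le_zero.mp ht') ▸ h
  | succ s ih =>
    rcases Nat.lt_or_ge t (s+1) with hlt | hge
    · have hs : ∀ i j, traj r E x0 s i = traj r E x0 s j := ih (by omega)
      intro i j
      show step r (E s) (traj r E x0 s) i = step r (E s) (traj r E x0 s) j
      rw [step_const r (E s) _ hs i, step_const r (E s) _ hs j]
      exact hs i j
    · have : t = s + 1 := by omega
      exact this ▸ h

/-- If the largest confidence bound is at least 2, the RIBC system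
reaches consensus in finite time almost surely, from any deterministic initial state in
the product of unit balls. -/
theorem ribc_consensus_deterministic_initial
    {n d : ℕ} (hn : 3 ≤ n) (hd : 1 ≤ d)
    (r : Fin n → ℝ) (hrpos : ∀ i, 0 < r i)
    (hrmono : ∀ i j : Fin n, i ≤ j → r j ≤ r i)
    (hr1 : 2 ≤ r ⟨0, by omega⟩)
    {Ω : Type*} [MeasurableSpace Ω] (P : Measure Ω) [IsProbabilityMeasure P]
    (𝓔 : ℕ → Ω → Finset (Fin n × Fin n)) (h𝓔meas : ∀ t, Measurable (𝓔 t))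
    (h𝓔sub : ∀ t ω, 𝓔 t ω ⊆ (Finset.univ : Finset (Fin n)).offDiag)
    (h𝓔indep : iIndepFun 𝓔 P)
    (δ : ℝ) (hδ : δ ∈ Set.Ioo (0 : ℝ) 1)
    (h𝓔low : ∀ (t : ℕ) (F : Finset (Fin n × Fin n)),
      F ⊆ (Finset.univ : Finset (Fin n)).offDiag →
      ENNReal.ofReal δ ≤ P {ω | 𝓔 t ω = F})
    (x0 : Fin n → EuclideanSpace ℝ (Fin d)) (hx0 : ∀ i, ‖x0 i‖ ≤ 1) :
    ∀ᵐ ω ∂P, ∃ τ : ℕ, ∀ t, τ ≤ t → ∀ i j : Fin n,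
      traj r (fun s => 𝓔 s ω) x0 t i = traj r (fun s => 𝓔 s ω) x0 t j := by
  obtain ⟨L, hLsub, hLcons⟩ := main_det (d := d) hn r hrpos hrmono hr1
  set N := L.length with hNdef
  set B : ℕ → Set Ω := fun m => ⋂ k ∈ Finset.range N, {ω | 𝓔 (m*N + k) ω = L.getD k ∅}
    with hBdef
  have hBmeas : ∀ m, MeasurableSet (B m) := by
    intro m
    apply MeasurableSet.biInter (Set.to_countable _)
    intro k _
    have heq : {ω | 𝓔 (m*N + k) ω = L.getD k ∅}
        = 𝓔 (m*N + k) ⁻¹' ({L.getD k ∅} : Set (Finset (Fin n × Fin n))) := by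
      ext ω; simp
    rw [heq]
    exact (h𝓔meas (m*N + k)) trivial
  -- product formula for events about finitely many times
  have hprod : ∀ (T : Finset ℕ) (c : ℕ → Finset (Fin n × Fin n)),
      P (⋂ t ∈ T, {ω | 𝓔 t ω = c t}) = ∏ t ∈ T, P {ω | 𝓔 t ω = c t} := by
    intro T c
    have h := h𝓔indep.measure_inter_preimage_eq_mul T
      (sets := fun t => ({c t} : Set (Finset (Fin n × Fin n)))) (fun t _ => trivial)
    have heq : ∀ t : ℕ, 𝓔 t ⁻¹' ({c t} : Set (Finset (Fin n × Fin n)))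
        = {ω | 𝓔 t ω = c t} := by
      intro t; ext ω; simp
    calc P (⋂ t ∈ T, {ω | 𝓔 t ω = c t})
        = P (⋂ t ∈ T, 𝓔 t ⁻¹' {c t}) := by
          rw [Set.iInter₂_congr (fun t (_ : t ∈ T) => (heq t).symm)]
      _ = ∏ t ∈ T, P (𝓔 t ⁻¹' {c t}) := h
      _ = ∏ t ∈ T, P {ω | 𝓔 t ω = c t} := Finset.prod_congr rfl (fun t _ => by rw [heq t])
  -- rewrite a block event as an intersection over times
  have hBalt : ∀ m : ℕ, B m =
      ⋂ t ∈ (Finset.range N).image (fun k => m*N + k), {ω | 𝓔 t ω = L.getD (t % N) ∅} := by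
    intro m
    rw [hBdef]
    ext ω
    simp only [Set.mem_iInter, Finset.mem_range, Finset.mem_image, Set.mem_setOf_eq]
    constructor
    · rintro h t ⟨k, hk, rfl⟩
      have hmod : (m*N + k) % N = k := by
        rw [Nat.mul_comm, Nat.mul_add_mod]
        exact Nat.mod_eq_of_lt hk
      rw [hmod]
      exact h k hk
    · intro h k hk
      have hmod : (m*N + k) % N = k := by
        rw [Nat.mul_comm, Nat.mul_add_mod]
        exact Nat.mod_eq_of_lt hk
      have := h (m*N + k) ⟨k, hk, rfl⟩
      rwa [hmod] at this
  have hinj : ∀ m : ℕ, Set.InjOn (fun k => m*N + k) (Finset.range N : Set ℕ) := by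
    intro m k _ k' _ h
    have h' : m*N + k = m*N + k' := h
    exact Nat.add_left_cancel h'
  have hBprod : ∀ m : ℕ, P (B m) = ∏ k ∈ Finset.range N, P {ω | 𝓔 (m*N + k) ω = L.getD k ∅} := by
    intro m
    rw [hBalt m, hprod]
    rw [Finset.prod_image (fun k hk k' hk' h => hinj m hk hk' h)]
    refine Finset.prod_congr rfl (fun k hk => ?_)
    have hmod : (m*N + k) % N = k := by
      rw [Nat.mul_comm, Nat.mul_add_mod]
      exact Nat.mod_eq_of_lt (Finset.mem_range.mp hk)
    rw [hmod]
  -- independence of the block events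
  have hdisj : ∀ (S : Finset ℕ), (S : Set ℕ).PairwiseDisjoint
      (fun m => (Finset.range N).image (fun k => m*N + k)) := by
    intro S m _ m' _ hmm'
    apply Finset.disjoint_left.mpr
    intro t ht ht'
    simp only [Finset.mem_image, Finset.mem_range] at ht ht'
    obtain ⟨k, hk, rfl⟩ := ht
    obtain ⟨k', hk', he⟩ := ht'
    have hN0 : 0 < N := by omega
    have hdiv : ∀ (a b : ℕ), b < N → (a*N + b) / N = a := by
      intro a b hb
      rw [Nat.mul_comm, Nat.mul_add_div hN0, Nat.div_eq_of_lt hb, Nat.add_zero]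
    have h1 : (m*N + k) / N = m := hdiv m k hk
    have h2 : (m*N + k) / N = m' := by rw [← he]; exact hdiv m' k' hk'
    exact hmm' (h1 ▸ h2)
  have hBindep : iIndepSet B P := by
    rw [iIndepSet_iff_meas_biInter hBmeas]
    intro S
    calc P (⋂ m ∈ S, B m)
        = P (⋂ t ∈ S.biUnion (fun m => (Finset.range N).image (fun k => m*N + k)),
            {ω | 𝓔 t ω = L.getD (t % N) ∅}) := by
          rw [Finset.set_biInter_biUnion]
          congr 1
          exact Set.iInter₂_congr (fun m _ => hBalt m)
      _ = ∏ t ∈ S.biUnion (fun m => (Finset.range N).image (fun k => m*N + k)),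
            P {ω | 𝓔 t ω = L.getD (t % N) ∅} := hprod _ _
      _ = ∏ m ∈ S, ∏ t ∈ (Finset.range N).image (fun k => m*N + k),
            P {ω | 𝓔 t ω = L.getD (t % N) ∅} := Finset.prod_biUnion (hdisj S)
      _ = ∏ m ∈ S, P (B m) := by
          refine Finset.prod_congr rfl (fun m _ => ?_)
          rw [hBalt m, hprod]
  -- lower bound on block probability
  have hBlow : ∀ m, ENNReal.ofReal δ ^ N ≤ P (B m) := by
    intro m
    rw [hBprod m]
    calc (ENNReal.ofReal δ) ^ N = ∏ _k ∈ Finset.range N, ENNReal.ofReal δ := by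
          rw [Finset.prod_const, Finset.card_range]
      _ ≤ ∏ k ∈ Finset.range N, P {ω | 𝓔 (m*N + k) ω = L.getD k ∅} := by
          refine Finset.prod_le_prod' (fun k hk => ?_)
          refine h𝓔low (m*N + k) (L.getD k ∅) ?_
          rw [List.getD_eq_getElem L ∅ (Finset.mem_range.mp hk)]
          exact hLsub _ (List.getElem_mem _)
  -- the blocks succeed infinitely often a.s.
  have htsum : (∑' m, P (B m)) = (⊤ : ENNReal) := by
    rw [eq_top_iff]
    calc (⊤ : ENNReal) = ∑' _m : ℕ, ENNReal.ofReal δ ^ N := by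
          rw [ENNReal.tsum_const_eq_top_of_ne_zero]
          exact pow_ne_zero N (ne_of_gt (ENNReal.ofReal_pos.mpr hδ.1))
      _ ≤ ∑' m, P (B m) := ENNReal.tsum_le_tsum hBlow
  have hlimsup : P (Filter.limsup B Filter.atTop) = 1 :=
    measure_limsup_eq_one hBmeas hBindep htsum
  have hae : ∀ᵐ ω ∂P, ω ∈ Filter.limsup B Filter.atTop := by
    have hms : MeasurableSet (Filter.limsup B Filter.atTop) := by
      rw [Filter.limsup_eq_iInf_iSup_of_nat]
      exact MeasurableSet.iInter (fun m => MeasurableSet.iUnion (fun i =>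
        MeasurableSet.iUnion (fun _ => hBmeas i)))
    rw [ae_iff]
    have : {ω | ¬ ω ∈ Filter.limsup B Filter.atTop} = (Filter.limsup B Filter.atTop)ᶜ := rfl
    rw [this, measure_compl hms (measure_ne_top P _), hlimsup, measure_univ]
    simp
  filter_upwards [hae] with ω hω
  -- from membership in limsup, get one successful block
  have hmem : ∃ m, ω ∈ B m := by
    rw [Filter.limsup_eq_iInf_iSup_of_nat] at hω
    simp only [Set.iInf_eq_iInter, Set.iSup_eq_iUnion, Set.mem_iInter, Set.mem_iUnion] at hω
    obtain ⟨i, _, hi⟩ := hω 0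
    exact ⟨i, hi⟩
  obtain ⟨m, hm⟩ := hmem
  refine ⟨m*N + N, fun t ht i j => ?_⟩
  have hblock : ∀ k, (hk : k < L.length) → (fun s => 𝓔 s ω) (m*N + k) = L[k] := by
    intro k hk
    rw [hBdef] at hm
    simp only [Set.mem_iInter, Finset.mem_range, Set.mem_setOf_eq] at hm
    have := hm k hk
    rwa [List.getD_eq_getElem L ∅ hk] at this
  have hrun : traj r (fun s => 𝓔 s ω) x0 (m*N + N)
      = run r L (traj r (fun s => 𝓔 s ω) x0 (m*N)) :=
    traj_run r (fun s => 𝓔 s ω) x0 L (m*N) hblock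
  have hcons : ∀ i j : Fin n, traj r (fun s => 𝓔 s ω) x0 (m*N + N) i
      = traj r (fun s => 𝓔 s ω) x0 (m*N + N) j := by
    intro i j
    rw [hrun]
    exact hLcons _ (traj_ball r _ x0 hx0 (m*N)) i j
  exact traj_persist r (fun s => 𝓔 s ω) x0 (m*N + N) hcons t ht i j
end
end
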